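/- arXiv:hep-th/9403178 — 10 statements merged into one kernel-verified Lean document; each statement's English description precedes it below -/
import Mathlib

section
/- Let V be a finite-dimensional real inner product space and R a normalized root system in V (see context), with k : R → ℝ satisfying k(s_α(β)) = k(β) for all α, β ∈ R. For ξ ∈ V define the Dunkl operator on smooth functions F on U = {x ∈ V : (α,x) ≠ 0 for all α ∈ R} by (∇_ξ F)(x) = (∂_ξ F)(x) + (1/2) Σ_{α∈R} k(α)(α,ξ)(α,x)⁻¹ F(s_α(x)). Then for all ξ, η ∈ V and every smooth function F : U → ℝ, ∇_ξ(∇_η F) = ∇_η(∇_ξ F) on U. -/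
/-!
STATEMENT 0: Dunkl's theorem. For a normalized root system `R` in a
finite-dimensional real inner product space `V` and a `G`-invariant
multiplicity function `k`, the Dunkl operators commute on
`U = {x | ∀ α ∈ R, ⟪α, x⟫ ≠ 0}`.
-/

open scoped RealInnerProductSpace

/-- The orthogonal reflection `s_α` fixing the hyperplane `α^⊥`. -/
noncomputable def reflectIn {V : Type*} [NormedAddCommGroup V] [InnerProductSpace ℝ V]
    (α x : V) : V :=
  x - (2 * ⟪α, x⟫ / ⟪α, α⟫) • α

/-- The Dunkl operator `∇_ξ` attached to the finite set `R` with coefficients `k`: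
`(∇_ξ F)(x) = (∂_ξ F)(x) + (1/2) Σ_{α∈R} k(α)(α,ξ)(α,x)⁻¹ F(s_α x)`. -/
noncomputable def dunklOp {V : Type*} [NormedAddCommGroup V] [InnerProductSpace ℝ V]
    (R : Finset V) (k : V → ℝ) (ξ : V) (F : V → ℝ) (x : V) : ℝ :=
  fderiv ℝ F x ξ + (1 / 2) * ∑ α ∈ R, k α * ⟪α, ξ⟫ * (⟪α, x⟫)⁻¹ * F (reflectIn α x)

namespace DunklAux


variable {V : Type*} [NormedAddCommGroup V] [InnerProductSpace ℝ V]

lemma inner_self_one {α : V} (h : ‖α‖ = 1) : ⟪α, α⟫ = 1 := by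
  rw [real_inner_self_eq_norm_sq, h]; norm_num

lemma reflect_eq {α : V} (h : ⟪α, α⟫ = 1) (x : V) :
    reflectIn α x = x - (2 * ⟪α, x⟫) • α := by
  simp only [reflectIn, h, div_one]

lemma inner_reflect_right {α : V} (h : ⟪α, α⟫ = 1) (β x : V) :
    ⟪β, reflectIn α x⟫ = ⟪reflectIn α β, x⟫ := by
  simp only [reflect_eq h, inner_sub_right, inner_sub_left, real_inner_smul_right,
    real_inner_smul_left]
  rw [real_inner_comm α β]; ring

lemma inner_reflect_self {α : V} (h : ⟪α, α⟫ = 1) (x : V) :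
    ⟪α, reflectIn α x⟫ = -⟪α, x⟫ := by
  simp only [reflect_eq h, inner_sub_right, real_inner_smul_right, h]; ring

lemma reflect_reflect {α : V} (h : ⟪α, α⟫ = 1) (x : V) :
    reflectIn α (reflectIn α x) = x := by
  rw [reflect_eq h (reflectIn α x), inner_reflect_self h, reflect_eq h x]
  module

lemma inner_reflect_reflect {α : V} (h : ⟪α, α⟫ = 1) (u v : V) :
    ⟪reflectIn α u, reflectIn α v⟫ = ⟪u, v⟫ := by
  rw [inner_reflect_right h, reflect_reflect h]

lemma reflect_conj {α β : V} (hα : ⟪α, α⟫ = 1) (hβ : ⟪β, β⟫ = 1) (v : V) :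
    reflectIn (reflectIn β α) v = reflectIn β (reflectIn α (reflectIn β v)) := by
  have hβα : ⟪reflectIn β α, reflectIn β α⟫ = 1 := by
    rw [inner_reflect_reflect hβ, hα]
  rw [reflect_eq hβα, reflect_eq hβ v, reflect_eq hα, reflect_eq hβ]
  simp only [inner_sub_right, inner_sub_left, real_inner_smul_right, real_inner_smul_left,
    reflect_eq hβ, hβ, smul_sub, smul_smul]
  rw [real_inner_comm β α]
  match_scalars <;> ring

lemma reflect_comp {α β : V} (hα : ⟪α, α⟫ = 1) (hβ : ⟪β, β⟫ = 1) (v : V) :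
    reflectIn β (reflectIn (reflectIn β α) v) = reflectIn α (reflectIn β v) := by
  rw [reflect_conj hα hβ, reflect_reflect hβ]

lemma reflect_neg (α x : V) : reflectIn (-α) x = reflectIn α x := by
  simp [reflectIn, neg_smul, smul_neg, neg_div, inner_neg_left, inner_neg_right, mul_neg]

lemma reflect_fix {α v : V} (h : ⟪α, v⟫ = 0) : reflectIn α v = v := by
  simp [reflectIn, h]

lemma inner_sq_lt_one {α β : V} (hα : ‖α‖ = 1) (hβ : ‖β‖ = 1) (h1 : β ≠ α) (h2 : β ≠ -α) :
    ⟪α, β⟫ ^ 2 < 1 := by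
  have hle : |⟪α, β⟫| ≤ 1 := by
    have := abs_real_inner_le_norm α β
    rwa [hα, hβ, mul_one] at this
  have hsq : ⟪α, β⟫ ^ 2 ≤ 1 := by
    rw [← sq_abs]; nlinarith [abs_nonneg ⟪α, β⟫]
  rcases eq_or_lt_of_le hsq with he | h
  · exfalso
    have habs : |⟪α, β⟫| = 1 := by nlinarith [abs_nonneg ⟪α, β⟫, sq_abs ⟪α, β⟫]
    rcases abs_eq (by norm_num : (0:ℝ) ≤ 1) |>.mp habs with h' | h'
    · exact h1 ((inner_eq_one_iff_of_norm_eq_one hα hβ).mp h').symm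
    · have : ⟪α, -β⟫ = 1 := by rw [inner_neg_right, h']; ring
      have h3 := (inner_eq_one_iff_of_norm_eq_one hα (by rw [norm_neg]; exact hβ)).mp this
      exact h2 (by rw [h3, neg_neg])
  · exact h

lemma unit_cancel {α β : V} (hα : ‖α‖ = 1) (hβ : ‖β‖ = 1) (h1 : β ≠ α) (h2 : β ≠ -α)
    {c d : ℝ} (h : c • α = d • β) : c = 0 ∧ d = 0 := by
  have hα1 : ⟪α, α⟫ = 1 := inner_self_one hα
  have hβ1 : ⟪β, β⟫ = 1 := inner_self_one hβ
  have hc : c = d * ⟪α, β⟫ := by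
    have := congrArg (fun v => ⟪α, v⟫) h
    simpa [real_inner_smul_right, hα1, hα] using this
  have hd : d = c * ⟪α, β⟫ := by
    have := congrArg (fun v => ⟪β, v⟫) h
    simp only [real_inner_smul_right, hβ1, mul_one] at this
    rw [← this, real_inner_comm]
  have ht := inner_sq_lt_one hα hβ h1 h2
  have hcc : c * (1 - ⟪α, β⟫ ^ 2) = 0 := by
    rw [hd] at hc
    linear_combination hc
  have hc0 : c = 0 := by
    rcases mul_eq_zero.mp hcc with h' | h'
    · exact h'
    · linarith
  exact ⟨hc0, by rw [hd, hc0, zero_mul]⟩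

section Fiber

variable (R : Finset V) (k : V → ℝ) (F : V → ℝ)

lemma fiber_sum_zero
    (hunit : ∀ α ∈ R, ‖α‖ = 1)
    (hrefl : ∀ α ∈ R, ∀ β ∈ R, reflectIn α β ∈ R)
    (hk : ∀ α ∈ R, ∀ β ∈ R, k (reflectIn α β) = k β)
    (ξ η x : V) (hx : ∀ α ∈ R, ⟪α, x⟫ ≠ 0)
    [FiniteDimensional ℝ V]
    (w : V → V) (s : Finset (V × V))
    (hs : ∀ p : V × V, p ∈ s ↔
      (p.1 ∈ R ∧ p.2 ∈ R ∧ ∀ v, reflectIn p.1 (reflectIn p.2 v) = w v)) :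
    ∑ p ∈ s, k p.1 * k p.2 * (⟪p.1, ξ⟫ * ⟪p.2, η⟫ - ⟪p.1, η⟫ * ⟪p.2, ξ⟫)
      * ⟪p.1, x⟫⁻¹ * ⟪p.2, x⟫⁻¹ * F (reflectIn p.1 (reflectIn p.2 x)) = 0 := by
  classical
  by_cases hdep : ∀ p ∈ s, p.2 = p.1 ∨ p.2 = -p.1
  · refine Finset.sum_eq_zero fun p hp => ?_
    rcases hdep p hp with h | h
    · rw [h]; ring
    · rw [h]; simp only [inner_neg_left]; ring
  · push_neg at hdep
    obtain ⟨p₀, hp₀, hne1, hne2⟩ := hdep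
    obtain ⟨hα₀R, hβ₀R, hw₀⟩ := (hs p₀).mp hp₀
    set α₀ := p₀.1 with hα₀def
    set β₀ := p₀.2 with hβ₀def
    have hα₀u : ⟪α₀, α₀⟫ = 1 := inner_self_one (hunit _ hα₀R)
    have hβ₀u : ⟪β₀, β₀⟫ = 1 := inner_self_one (hunit _ hβ₀R)
    have ht : ⟪α₀, β₀⟫ ^ 2 < 1 := inner_sq_lt_one (hunit _ hα₀R) (hunit _ hβ₀R) hne1 hne2
    -- all pairs in the fiber are "independent"
    have hind : ∀ p ∈ s, p.2 ≠ p.1 ∧ p.2 ≠ -p.1 := by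
      intro p hp
      obtain ⟨h1R, h2R, hwp⟩ := (hs p).mp hp
      have h1u : ⟪p.1, p.1⟫ = 1 := inner_self_one (hunit _ h1R)
      have key : (∀ v, reflectIn p.1 (reflectIn p.2 v) = v) → False := by
        intro hid
        have hid₀ : ∀ v, reflectIn α₀ (reflectIn β₀ v) = v := by
          intro v; rw [hw₀ v, ← hwp v, hid v]
        have h2 : ⟪β₀, reflectIn α₀ (reflectIn β₀ β₀)⟫ = ⟪β₀, β₀⟫ := by rw [hid₀]
        simp only [reflect_eq hα₀u, reflect_eq hβ₀u, inner_sub_right, inner_sub_left,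
          real_inner_smul_right, real_inner_smul_left, hα₀u, hβ₀u] at h2
        rw [real_inner_comm β₀ α₀] at h2
        rw [real_inner_comm β₀ α₀] at ht
        nlinarith [h2, ht]
      constructor
      · intro hcon
        exact key fun v => by rw [hcon, reflect_reflect h1u]
      · intro hcon
        exact key fun v => by rw [hcon, reflect_neg, reflect_reflect h1u]
    -- orthogonality transfer
    have horth : ∀ p ∈ s, ∀ v : V, ⟪α₀, v⟫ = 0 → ⟪β₀, v⟫ = 0 →
        ⟪p.1, v⟫ = 0 ∧ ⟪p.2, v⟫ = 0 := by
      intro p hp v hv1 hv2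
      obtain ⟨h1R, h2R, hwp⟩ := (hs p).mp hp
      have h1u : ⟪p.1, p.1⟫ = 1 := inner_self_one (hunit _ h1R)
      have h2u : ⟪p.2, p.2⟫ = 1 := inner_self_one (hunit _ h2R)
      have hfix : reflectIn p.1 (reflectIn p.2 v) = v := by
        rw [hwp v, ← hw₀ v, reflect_fix hv2, reflect_fix hv1]
      have heq : reflectIn p.2 v = reflectIn p.1 v := by
        have := congrArg (reflectIn p.1) hfix
        rwa [reflect_reflect h1u] at this
      rw [reflect_eq h2u, reflect_eq h1u] at heq
      have hsm : (2 * ⟪p.2, v⟫) • p.2 = (2 * ⟪p.1, v⟫) • p.1 := sub_right_inj.mp heq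
      have hne1' : p.1 ≠ p.2 := fun hcon => (hind p hp).1 hcon.symm
      have hne2' : p.1 ≠ -p.2 := by
        intro hcon
        exact (hind p hp).2 (by rw [hcon, neg_neg])
      obtain ⟨hc, hd⟩ := unit_cancel (hunit _ h2R) (hunit _ h1R) hne1' hne2' hsm
      constructor <;> linarith
    -- span membership criterion
    have hspan : ∀ γ : V, (∀ v : V, ⟪α₀, v⟫ = 0 → ⟪β₀, v⟫ = 0 → ⟪γ, v⟫ = 0) →
        γ ∈ Submodule.span ℝ {α₀, β₀} := by
      intro γ hγ
      rw [← Submodule.orthogonal_orthogonal (Submodule.span ℝ {α₀, β₀}),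
        Submodule.mem_orthogonal]
      intro v hv
      have h1 : ⟪α₀, v⟫ = 0 := (Submodule.mem_orthogonal _ v).mp hv α₀
        (Submodule.subset_span (by simp))
      have h2 : ⟪β₀, v⟫ = 0 := (Submodule.mem_orthogonal _ v).mp hv β₀
        (Submodule.subset_span (by simp))
      rw [real_inner_comm]
      exact hγ v h1 h2
    set t := ⟪α₀, β₀⟫ with htdef
    set sr := Real.sqrt (1 - t ^ 2) with hsrdef
    have hsr : 0 < sr := Real.sqrt_pos.mpr (by linarith)
    have hsr2 : sr ^ 2 = 1 - t ^ 2 := Real.sq_sqrt (by linarith)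
    set e₂ := sr⁻¹ • (β₀ - t • α₀) with he₂def
    have he12 : ⟪α₀, e₂⟫ = 0 := by
      rw [he₂def, real_inner_smul_right, inner_sub_right, real_inner_smul_right, hα₀u]
      rw [← htdef]; ring
    have haux : ⟪β₀ - t • α₀, β₀ - t • α₀⟫ = 1 - t ^ 2 := by
      rw [inner_sub_sub_self]
      rw [real_inner_smul_right, real_inner_smul_left, real_inner_smul_left,
        real_inner_smul_right, hα₀u, hβ₀u, real_inner_comm α₀ β₀, ← htdef]
      ring
    have he22 : ⟪e₂, e₂⟫ = 1 := by
      rw [he₂def, real_inner_smul_left, real_inner_smul_right, haux]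
      rw [← hsr2]
      field_simp
    have hβe : β₀ = t • α₀ + sr • e₂ := by
      rw [he₂def, smul_smul, mul_inv_cancel₀ hsr.ne', one_smul]
      module
    -- coordinates
    have hcoord : ∀ γ ∈ Submodule.span ℝ {α₀, β₀}, γ = ⟪α₀, γ⟫ • α₀ + ⟪e₂, γ⟫ • e₂ := by
      intro γ hγ
      obtain ⟨a, b, hab⟩ := Submodule.mem_span_pair.mp hγ
      have hγe : γ = (a + b * t) • α₀ + (b * sr) • e₂ := by
        rw [← hab]
        nth_rewrite 1 [hβe]
        module
      have hA : ⟪α₀, γ⟫ = a + b * t := by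
        rw [hγe, inner_add_right, real_inner_smul_right, real_inner_smul_right, hα₀u, he12]
        ring
      have hB : ⟪e₂, γ⟫ = b * sr := by
        rw [hγe, inner_add_right, real_inner_smul_right, real_inner_smul_right, he22,
          real_inner_comm α₀ e₂, he12]
        ring
      rw [hA, hB]
      exact hγe
    have hAx : ⟪α₀, x⟫ ≠ 0 := hx _ hα₀R
    have hρ : ⟪α₀, x⟫ ^ 2 + ⟪e₂, x⟫ ^ 2 ≠ 0 := by
      have h1 : 0 < ⟪α₀, x⟫ ^ 2 := lt_of_le_of_ne (sq_nonneg _) (Ne.symm (pow_ne_zero 2 hAx))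
      nlinarith [sq_nonneg ⟪e₂, x⟫]
    set hf : V → ℝ := fun γ => (⟪α₀, γ⟫ * ⟪e₂, x⟫ - ⟪e₂, γ⟫ * ⟪α₀, x⟫) * ⟪γ, x⟫⁻¹ with hfdef
    have hterm : ∀ p ∈ s,
        k p.1 * k p.2 * (⟪p.1, ξ⟫ * ⟪p.2, η⟫ - ⟪p.1, η⟫ * ⟪p.2, ξ⟫)
          * ⟪p.1, x⟫⁻¹ * ⟪p.2, x⟫⁻¹ * F (reflectIn p.1 (reflectIn p.2 x))
        = k p.1 * k p.2 * (hf p.2 - hf p.1) *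
            (-(⟪α₀, ξ⟫ * ⟪e₂, η⟫ - ⟪e₂, ξ⟫ * ⟪α₀, η⟫) * (⟪α₀, x⟫ ^ 2 + ⟪e₂, x⟫ ^ 2)⁻¹
              * F (w x)) := by
      intro p hp
      obtain ⟨h1R, h2R, hwp⟩ := (hs p).mp hp
      have hc1 := hcoord _ (hspan p.1 fun v h1 h2 => (horth p hp v h1 h2).1)
      have hc2 := hcoord _ (hspan p.2 fun v h1 h2 => (horth p hp v h1 h2).2)
      have hp1x : ⟪p.1, x⟫ ≠ 0 := hx _ h1R
      have hp2x : ⟪p.2, x⟫ ≠ 0 := hx _ h2R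
      rw [hwp x]
      have e1 : ∀ u : V, ⟪p.1, u⟫ = ⟪α₀, p.1⟫ * ⟪α₀, u⟫ + ⟪e₂, p.1⟫ * ⟪e₂, u⟫ := by
        intro u
        conv_lhs => rw [hc1]
        rw [inner_add_left, real_inner_smul_left, real_inner_smul_left]
      have e2 : ∀ u : V, ⟪p.2, u⟫ = ⟪α₀, p.2⟫ * ⟪α₀, u⟫ + ⟪e₂, p.2⟫ * ⟪e₂, u⟫ := by
        intro u
        conv_lhs => rw [hc2]
        rw [inner_add_left, real_inner_smul_left, real_inner_smul_left]
      simp only [hfdef]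
      rw [e1 ξ, e1 η, e1 x, e2 ξ, e2 η, e2 x]
      rw [e1 x] at hp1x
      rw [e2 x] at hp2x
      field_simp
      ring
    rw [Finset.sum_congr rfl hterm, ← Finset.sum_mul]
    have hswap : ∑ p ∈ s, k p.1 * k p.2 * hf p.1 = ∑ p ∈ s, k p.1 * k p.2 * hf p.2 := by
      refine Finset.sum_nbij' (fun p => (reflectIn p.1 p.2, p.1))
        (fun p => (p.2, reflectIn p.2 p.1)) ?_ ?_ ?_ ?_ ?_
      · intro p hp
        obtain ⟨h1R, h2R, hwp⟩ := (hs p).mp hp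
        have h1u := inner_self_one (hunit _ h1R)
        have h2u := inner_self_one (hunit _ h2R)
        refine (hs _).mpr ⟨hrefl _ h1R _ h2R, h1R, fun v => ?_⟩
        rw [reflect_conj h2u h1u (reflectIn p.1 v), reflect_reflect h1u, hwp v]
      · intro p hp
        obtain ⟨h1R, h2R, hwp⟩ := (hs p).mp hp
        have h1u := inner_self_one (hunit _ h1R)
        have h2u := inner_self_one (hunit _ h2R)
        refine (hs _).mpr ⟨h2R, hrefl _ h2R _ h1R, fun v => ?_⟩
        rw [reflect_comp h1u h2u, hwp v]
      · intro p hp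
        obtain ⟨h1R, h2R, hwp⟩ := (hs p).mp hp
        have h1u := inner_self_one (hunit _ h1R)
        simp only [reflect_reflect h1u]
      · intro p hp
        obtain ⟨h1R, h2R, hwp⟩ := (hs p).mp hp
        have h2u := inner_self_one (hunit _ h2R)
        simp only [reflect_reflect h2u]
      · intro p hp
        obtain ⟨h1R, h2R, hwp⟩ := (hs p).mp hp
        rw [hk p.1 h1R p.2 h2R]
        ring
    have hzero : ∑ p ∈ s, k p.1 * k p.2 * (hf p.2 - hf p.1) = 0 := by
      have : ∀ p ∈ s, k p.1 * k p.2 * (hf p.2 - hf p.1)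
          = k p.1 * k p.2 * hf p.2 - k p.1 * k p.2 * hf p.1 := fun p _ => mul_sub _ _ _
      rw [Finset.sum_congr rfl this, Finset.sum_sub_distrib, hswap, sub_self]
    rw [hzero, zero_mul]

end Fiber
noncomputable def reflCLM (α : V) : V →L[ℝ] V :=
  ContinuousLinearMap.id ℝ V - (innerSL ℝ α).smulRight ((2 : ℝ) • α)

lemma reflCLM_apply (α x : V) : reflCLM α x = x - ⟪α, x⟫ • ((2 : ℝ) • α) := rfl

lemma reflect_eq_reflCLM {α : V} (h : ⟪α, α⟫ = 1) (x : V) :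
    reflectIn α x = reflCLM α x := by
  rw [reflect_eq h, reflCLM_apply, smul_comm, smul_smul]

lemma isOpen_U (R : Finset V) : IsOpen {x : V | ∀ α ∈ R, ⟪α, x⟫ ≠ 0} := by
  have : {x : V | ∀ α ∈ R, ⟪α, x⟫ ≠ 0} = ⋂ α ∈ R, {x : V | ⟪α, x⟫ ≠ 0} := by
    ext x; simp
  rw [this]
  refine isOpen_biInter_finset fun α _ => ?_
  have : {x : V | ⟪α, x⟫ ≠ 0} = (fun x : V => ⟪α, x⟫) ⁻¹' {(0:ℝ)}ᶜ := rfl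
  rw [this]
  exact (isOpen_compl_singleton).preimage (continuous_const.inner continuous_id)

section Calc

variable (R : Finset V) (k : V → ℝ) (F : V → ℝ)

lemma reflect_mem_U (hunit : ∀ α ∈ R, ‖α‖ = 1) (hrefl : ∀ α ∈ R, ∀ β ∈ R, reflectIn α β ∈ R)
    {α : V} (hα : α ∈ R) {x : V} (hx : x ∈ {x : V | ∀ α ∈ R, ⟪α, x⟫ ≠ 0}) :
    reflectIn α x ∈ {x : V | ∀ α ∈ R, ⟪α, x⟫ ≠ 0} := by
  intro β hβ
  rw [inner_reflect_right (inner_self_one (hunit α hα))]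
  exact hx _ (hrefl α hα β hβ)

lemma fderiv_dunkl_apply (hunit : ∀ α ∈ R, ‖α‖ = 1)
    (hrefl : ∀ α ∈ R, ∀ β ∈ R, reflectIn α β ∈ R) (hF : ContDiffOn ℝ (⊤ : ℕ∞) F {x : V | ∀ α ∈ R, ⟪α, x⟫ ≠ 0})
    {x : V} (hx : x ∈ {x : V | ∀ α ∈ R, ⟪α, x⟫ ≠ 0}) (ξ η : V) :
    fderiv ℝ (dunklOp R k η F) x ξ =
      fderiv ℝ (fderiv ℝ F) x ξ η
      + (1 / 2) * ∑ α ∈ R, k α * ⟪α, η⟫ *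
          (⟪α, x⟫⁻¹ * fderiv ℝ F (reflectIn α x) (reflectIn α ξ)
           - ⟪α, ξ⟫ * (⟪α, x⟫⁻¹ * ⟪α, x⟫⁻¹) * F (reflectIn α x)) := by
  have hU := isOpen_U R
  have hF2 : ContDiffAt ℝ 2 F x := (hF.contDiffAt (hU.mem_nhds hx)).of_le (by exact WithTop.coe_le_coe.mpr (le_top : (2 : ℕ∞) ≤ ⊤))
  have hdF : DifferentiableAt ℝ (fderiv ℝ F) x :=
    (hF2.fderiv_right (m := 1) le_rfl).differentiableAt one_ne_zero
  -- derivative of y ↦ fderiv F y η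
  have h1 : HasFDerivAt (fun y => fderiv ℝ F y η)
      ((fderiv ℝ F x).comp (0 : V →L[ℝ] V) + (fderiv ℝ (fderiv ℝ F) x).flip η) x := by
    simpa using hdF.hasFDerivAt.clm_apply (hasFDerivAt_const η x)
  -- derivative of each summand
  have hsum : ∀ α ∈ R, HasFDerivAt
      (fun y => k α * ⟪α, η⟫ * ⟪α, y⟫⁻¹ * F (reflectIn α y))
      (((k α * ⟪α, η⟫ * ⟪α, x⟫⁻¹) • ((fderiv ℝ F (reflectIn α x)).comp (reflCLM α))
        + F (reflectIn α x) • ((k α * ⟪α, η⟫) • ((-(⟪α, x⟫ ^ 2)⁻¹) • (innerSL ℝ α)))) : V →L[ℝ] ℝ) x := by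
    intro α hα
    have hα1 : ⟪α, α⟫ = 1 := inner_self_one (hunit α hα)
    have hinner : HasFDerivAt (fun y : V => ⟪α, y⟫) (innerSL ℝ α : V →L[ℝ] ℝ) x :=
      (innerSL ℝ α).hasFDerivAt
    have hinv : HasFDerivAt (fun y : V => ⟪α, y⟫⁻¹)
        ((-(⟪α, x⟫ ^ 2)⁻¹) • (innerSL ℝ α : V →L[ℝ] ℝ)) x := by
      simpa [Function.comp_def] using
        (hasDerivAt_inv (hx α hα)).comp_hasFDerivAt x hinner
    have hsx : reflectIn α x ∈ {x : V | ∀ α ∈ R, ⟪α, x⟫ ≠ 0} :=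
      reflect_mem_U R hunit hrefl hα hx
    have hFd : DifferentiableAt ℝ F (reflectIn α x) :=
      (hF.contDiffAt (hU.mem_nhds hsx)).differentiableAt (by simp)
    have hcomp : HasFDerivAt (fun y => F (reflectIn α y))
        ((fderiv ℝ F (reflectIn α x)).comp (reflCLM α)) x := by
      have hrc : reflCLM α x = reflectIn α x := (reflect_eq_reflCLM hα1 x).symm
      have h := HasFDerivAt.comp (g := F) x (by rw [hrc] at *; exact hFd.hasFDerivAt)
        (reflCLM α).hasFDerivAt
      have hfun : (F ∘ (reflCLM α)) = fun y => F (reflectIn α y) := by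
        funext y; simp [Function.comp, reflect_eq_reflCLM hα1]
      rw [hfun] at h
      exact h
    simpa [mul_assoc] using (hinv.const_mul (k α * ⟪α, η⟫)).fun_mul hcomp
  have htot : HasFDerivAt (dunklOp R k η F)
      (((fderiv ℝ F x).comp (0 : V →L[ℝ] V) + (fderiv ℝ (fderiv ℝ F) x).flip η)
        + (1 / 2 : ℝ) • ∑ α ∈ R,
          (((k α * ⟪α, η⟫ * ⟪α, x⟫⁻¹) • ((fderiv ℝ F (reflectIn α x)).comp (reflCLM α))
            + F (reflectIn α x) • ((k α * ⟪α, η⟫) • ((-(⟪α, x⟫ ^ 2)⁻¹) • (innerSL ℝ α)))) : V →L[ℝ] ℝ)) x := by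
    exact h1.add ((HasFDerivAt.fun_sum hsum).const_mul (1/2 : ℝ))
  rw [htot.fderiv]
  simp only [ContinuousLinearMap.add_apply, ContinuousLinearMap.coe_comp',
    Function.comp_apply, ContinuousLinearMap.zero_apply, ContinuousLinearMap.flip_apply,
    ContinuousLinearMap.coe_smul', Pi.smul_apply, ContinuousLinearMap.coe_sum',
    Finset.sum_apply, ContinuousLinearMap.smul_apply, innerSL_apply_apply, smul_eq_mul,
    map_zero]
  rw [Finset.mul_sum, Finset.mul_sum]
  congr 1
  · simp
  refine Finset.sum_congr rfl fun α hα => ?_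
  have hα1 : ⟪α, α⟫ = 1 := inner_self_one (hunit α hα)
  rw [← reflect_eq_reflCLM hα1]
  rw [sq]
  ring

end Calc

lemma E_zero {V : Type*} [NormedAddCommGroup V] [InnerProductSpace ℝ V]
    [FiniteDimensional ℝ V]
    (R : Finset V) (k : V → ℝ) (F : V → ℝ)
    (hunit : ∀ α ∈ R, ‖α‖ = 1)
    (hrefl : ∀ α ∈ R, ∀ β ∈ R, reflectIn α β ∈ R)
    (hk : ∀ α ∈ R, ∀ β ∈ R, k (reflectIn α β) = k β)
    (ξ η x : V) (hx : ∀ α ∈ R, ⟪α, x⟫ ≠ 0) :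
    ∑ α ∈ R, ∑ β ∈ R, k α * k β * (⟪α, ξ⟫ * ⟪β, η⟫ - ⟪α, η⟫ * ⟪β, ξ⟫)
      * ⟪α, x⟫⁻¹ * ⟪β, x⟫⁻¹ * F (reflectIn α (reflectIn β x)) = 0 := by
  classical
  rw [← Finset.sum_product' R R (fun α β => k α * k β * (⟪α, ξ⟫ * ⟪β, η⟫ - ⟪α, η⟫ * ⟪β, ξ⟫)
      * ⟪α, x⟫⁻¹ * ⟪β, x⟫⁻¹ * F (reflectIn α (reflectIn β x)))]
  set gmap : V × V → (V → V) := fun p v => reflectIn p.1 (reflectIn p.2 v) with hgmap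
  rw [← Finset.sum_fiberwise_of_maps_to
    (fun p (hp : p ∈ R ×ˢ R) => Finset.mem_image_of_mem gmap hp)]
  refine Finset.sum_eq_zero fun w _ => ?_
  refine fiber_sum_zero R k F hunit hrefl hk ξ η x hx w _ fun p => ?_
  simp only [Finset.mem_filter, Finset.mem_product, hgmap]
  constructor
  · rintro ⟨⟨h1, h2⟩, h3⟩
    exact ⟨h1, h2, fun v => congrFun h3 v⟩
  · rintro ⟨h1, h2, h3⟩
    exact ⟨⟨h1, h2⟩, funext h3⟩

end DunklAux

open DunklAux in
theorem dunkl_operators_commute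
    {V : Type*} [NormedAddCommGroup V] [InnerProductSpace ℝ V] [FiniteDimensional ℝ V]
    (R : Finset V)
    (hunit : ∀ α ∈ R, ‖α‖ = 1)
    (hneg : ∀ α ∈ R, -α ∈ R)
    (hrefl : ∀ α ∈ R, ∀ β ∈ R, reflectIn α β ∈ R)
    (k : V → ℝ)
    (hk : ∀ α ∈ R, ∀ β ∈ R, k (reflectIn α β) = k β)
    (ξ η : V) (F : V → ℝ)
    (hF : ContDiffOn ℝ (⊤ : ℕ∞) F {x : V | ∀ α ∈ R, ⟪α, x⟫ ≠ 0}) :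
    ∀ x ∈ {x : V | ∀ α ∈ R, ⟪α, x⟫ ≠ 0},
      dunklOp R k ξ (dunklOp R k η F) x = dunklOp R k η (dunklOp R k ξ F) x := by
  intro x hx
  have hU := isOpen_U R
  have hxU : ∀ α ∈ R, ⟪α, x⟫ ≠ 0 := hx
  have expand : ∀ ζ θ : V, dunklOp R k ζ (dunklOp R k θ F) x
      = fderiv ℝ (fderiv ℝ F) x ζ θ
        + (1 / 2) * ∑ α ∈ R, k α * ⟪α, θ⟫ *
            (⟪α, x⟫⁻¹ * fderiv ℝ F (reflectIn α x) (reflectIn α ζ)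
             - ⟪α, ζ⟫ * (⟪α, x⟫⁻¹ * ⟪α, x⟫⁻¹) * F (reflectIn α x))
        + (1 / 2) * ∑ α ∈ R, k α * ⟪α, ζ⟫ * ⟪α, x⟫⁻¹ *
            (fderiv ℝ F (reflectIn α x) θ
             + (1 / 2) * ∑ β ∈ R, k β * ⟪β, θ⟫ * ⟪β, reflectIn α x⟫⁻¹
                 * F (reflectIn β (reflectIn α x))) := by
    intro ζ θ
    show fderiv ℝ (dunklOp R k θ F) x ζ
        + (1 / 2) * ∑ α ∈ R, k α * ⟪α, ζ⟫ * ⟪α, x⟫⁻¹ * (dunklOp R k θ F) (reflectIn α x) = _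
    rw [fderiv_dunkl_apply R k F hunit hrefl hF hxU ζ θ]
    simp only [dunklOp]
  have hsym : fderiv ℝ (fderiv ℝ F) x ξ η = fderiv ℝ (fderiv ℝ F) x η ξ := by
    have hF2 : ContDiffAt ℝ 2 F x := (hF.contDiffAt (hU.mem_nhds hx)).of_le (by exact WithTop.coe_le_coe.mpr (le_top : (2 : ℕ∞) ≤ ⊤))
    have hdF : DifferentiableAt ℝ (fderiv ℝ F) x :=
      (hF2.fderiv_right (m := 1) le_rfl).differentiableAt one_ne_zero
    have hev : ∀ᶠ y in nhds x, HasFDerivAt F (fderiv ℝ F y) y := by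
      filter_upwards [hU.mem_nhds hx] with y hy
      exact ((hF.contDiffAt (hU.mem_nhds hy)).differentiableAt (by simp)).hasFDerivAt
    exact second_derivative_symmetric_of_eventually hev hdF.hasFDerivAt ξ η
  have hDF : ∀ α ∈ R, ∀ ζ : V, fderiv ℝ F (reflectIn α x) (reflectIn α ζ)
      = fderiv ℝ F (reflectIn α x) ζ
        - 2 * ⟪α, ζ⟫ * fderiv ℝ F (reflectIn α x) α := by
    intro α hα ζ
    rw [show reflectIn α ζ = ζ - (2 * ⟪α, ζ⟫) • α from
      reflect_eq (inner_self_one (hunit _ hα)) ζ, map_sub, map_smul]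
    simp only [smul_eq_mul]
  have split : ∀ ζ θ : V,
      (1 / 2) * (∑ α ∈ R, k α * ⟪α, θ⟫ *
          (⟪α, x⟫⁻¹ * fderiv ℝ F (reflectIn α x) (reflectIn α ζ)
           - ⟪α, ζ⟫ * (⟪α, x⟫⁻¹ * ⟪α, x⟫⁻¹) * F (reflectIn α x)))
      + (1 / 2) * (∑ α ∈ R, k α * ⟪α, ζ⟫ * ⟪α, x⟫⁻¹ *
          (fderiv ℝ F (reflectIn α x) θ
           + (1 / 2) * ∑ β ∈ R, k β * ⟪β, θ⟫ * ⟪β, reflectIn α x⟫⁻¹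
               * F (reflectIn β (reflectIn α x))))
      = (1 / 2) * (∑ α ∈ R, (k α * ⟪α, θ⟫ * ⟪α, x⟫⁻¹ * fderiv ℝ F (reflectIn α x) ζ
            + k α * ⟪α, ζ⟫ * ⟪α, x⟫⁻¹ * fderiv ℝ F (reflectIn α x) θ
            - 2 * k α * ⟪α, ζ⟫ * ⟪α, θ⟫ * ⟪α, x⟫⁻¹ * fderiv ℝ F (reflectIn α x) α
            - k α * ⟪α, ζ⟫ * ⟪α, θ⟫ * (⟪α, x⟫⁻¹ * ⟪α, x⟫⁻¹) * F (reflectIn α x)))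
        + (1 / 4) * (∑ α ∈ R, ∑ β ∈ R, k α * ⟪α, ζ⟫ * ⟪α, x⟫⁻¹ *
            (k β * ⟪β, θ⟫ * ⟪β, reflectIn α x⟫⁻¹ * F (reflectIn β (reflectIn α x)))) := by
    intro ζ θ
    rw [Finset.mul_sum, Finset.mul_sum, Finset.mul_sum, Finset.mul_sum,
      ← Finset.sum_add_distrib, ← Finset.sum_add_distrib]
    refine Finset.sum_congr rfl fun α hα => ?_
    rw [hDF α hα ζ, ← Finset.mul_sum]
    ring
  have hreindex : ∀ ζ θ : V,
      (∑ α ∈ R, ∑ β ∈ R, k α * ⟪α, ζ⟫ * ⟪α, x⟫⁻¹ *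
          (k β * ⟪β, θ⟫ * ⟪β, reflectIn α x⟫⁻¹ * F (reflectIn β (reflectIn α x))))
      = ∑ α ∈ R, ∑ β ∈ R, k α * ⟪α, ζ⟫ * ⟪α, x⟫⁻¹ *
          (k β * (⟪β, θ⟫ - 2 * ⟪α, β⟫ * ⟪α, θ⟫) * ⟪β, x⟫⁻¹
            * F (reflectIn α (reflectIn β x))) := by
    intro ζ θ
    refine Finset.sum_congr rfl fun α hα => ?_
    have hα1 := inner_self_one (hunit _ hα)
    refine Finset.sum_nbij' (fun β => reflectIn α β) (fun β => reflectIn α β)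
      (fun β hβ => hrefl _ hα _ hβ) (fun β hβ => hrefl _ hα _ hβ)
      (fun β _ => reflect_reflect hα1 β) (fun β _ => reflect_reflect hα1 β)
      (fun β hβ => ?_)
    have hβ1 := inner_self_one (hunit _ hβ)
    rw [hk α hα β hβ]
    rw [inner_reflect_self hα1 β]
    rw [show ⟪reflectIn α β, θ⟫ = ⟪β, θ⟫ - 2 * ⟪α, β⟫ * ⟪α, θ⟫ by
      rw [reflect_eq hα1, inner_sub_left, real_inner_smul_left]]
    rw [show ⟪reflectIn α β, x⟫ = ⟪β, reflectIn α x⟫ from (inner_reflect_right hα1 β x).symm]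
    rw [reflect_comp hβ1 hα1 x]
    ring
  have hE := E_zero R k F hunit hrefl hk ξ η x hxU
  have hQd : (∑ α ∈ R, ∑ β ∈ R, k α * ⟪α, ξ⟫ * ⟪α, x⟫⁻¹ *
          (k β * (⟪β, η⟫ - 2 * ⟪α, β⟫ * ⟪α, η⟫) * ⟪β, x⟫⁻¹
            * F (reflectIn α (reflectIn β x))))
      - (∑ α ∈ R, ∑ β ∈ R, k α * ⟪α, η⟫ * ⟪α, x⟫⁻¹ *
          (k β * (⟪β, ξ⟫ - 2 * ⟪α, β⟫ * ⟪α, ξ⟫) * ⟪β, x⟫⁻¹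
            * F (reflectIn α (reflectIn β x))))
      = ∑ α ∈ R, ∑ β ∈ R, k α * k β * (⟪α, ξ⟫ * ⟪β, η⟫ - ⟪α, η⟫ * ⟪β, ξ⟫)
          * ⟪α, x⟫⁻¹ * ⟪β, x⟫⁻¹ * F (reflectIn α (reflectIn β x)) := by
    rw [← Finset.sum_sub_distrib]
    refine Finset.sum_congr rfl fun α _ => ?_
    rw [← Finset.sum_sub_distrib]
    refine Finset.sum_congr rfl fun β _ => ?_
    ring
  have hQ : (∑ α ∈ R, ∑ β ∈ R, k α * ⟪α, ξ⟫ * ⟪α, x⟫⁻¹ *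
          (k β * (⟪β, η⟫ - 2 * ⟪α, β⟫ * ⟪α, η⟫) * ⟪β, x⟫⁻¹
            * F (reflectIn α (reflectIn β x))))
      = ∑ α ∈ R, ∑ β ∈ R, k α * ⟪α, η⟫ * ⟪α, x⟫⁻¹ *
          (k β * (⟪β, ξ⟫ - 2 * ⟪α, β⟫ * ⟪α, ξ⟫) * ⟪β, x⟫⁻¹
            * F (reflectIn α (reflectIn β x))) := by
    have := hQd
    rw [hE] at this
    linarith [this]
  have hSym : (∑ α ∈ R, (k α * ⟪α, η⟫ * ⟪α, x⟫⁻¹ * fderiv ℝ F (reflectIn α x) ξ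
            + k α * ⟪α, ξ⟫ * ⟪α, x⟫⁻¹ * fderiv ℝ F (reflectIn α x) η
            - 2 * k α * ⟪α, ξ⟫ * ⟪α, η⟫ * ⟪α, x⟫⁻¹ * fderiv ℝ F (reflectIn α x) α
            - k α * ⟪α, ξ⟫ * ⟪α, η⟫ * (⟪α, x⟫⁻¹ * ⟪α, x⟫⁻¹) * F (reflectIn α x)))
      = (∑ α ∈ R, (k α * ⟪α, ξ⟫ * ⟪α, x⟫⁻¹ * fderiv ℝ F (reflectIn α x) η
            + k α * ⟪α, η⟫ * ⟪α, x⟫⁻¹ * fderiv ℝ F (reflectIn α x) ξ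
            - 2 * k α * ⟪α, η⟫ * ⟪α, ξ⟫ * ⟪α, x⟫⁻¹ * fderiv ℝ F (reflectIn α x) α
            - k α * ⟪α, η⟫ * ⟪α, ξ⟫ * (⟪α, x⟫⁻¹ * ⟪α, x⟫⁻¹) * F (reflectIn α x))) :=
    Finset.sum_congr rfl fun α _ => by ring
  rw [expand ξ η, expand η ξ, add_assoc, add_assoc, split ξ η, split η ξ, hsym,
    hSym, hreindex ξ η, hreindex η ξ, hQ]
end

section
/- Let V be a finite-dimensional real inner product space, R a reduced root system in V, and for each α ∈ R let f_α : ℝ ∖ {0} → ℝ be a smooth function with f_{−α}(z) = −f_α(−z). On U = {x ∈ V : (α,x) ≠ 0 for all α ∈ R}, for ξ ∈ V and F smooth on U define (∇_ξ F)(x) = (∂_ξ F)(x) + (1/2) Σ_{α∈R} (α,ξ) f_α((α,x)) F(s_α(x)). Then the following are equivalent: (a) for all ξ, η ∈ V and every smooth F : U → ℝ, ∇_ξ(∇_η F) = ∇_η(∇_ξ F) on U; (b) for every orthogonal transformation w of V, all ξ, η ∈ V and every x ∈ U, Σ_{(α,β) ∈ R×R : s_α∘s_β = w} ⟨α,β⟩_{ξ,η}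 f_α((α,x)) f_β((s_α(β),x)) = 0. -/
/-!
STATEMENT 2: For a reduced root system `R` and functions `f_α` on `ℝ ∖ {0}`
with `f_{-α}(z) = -f_α(-z)`, commutativity of the generalized Dunkl operators
on `U` is equivalent to the system of functional equations indexed by the
rotations `w = s_α ∘ s_β`.
-/

open scoped RealInnerProductSpace Classical

/-- `⟨α,β⟩_{ξ,η} = (α,ξ)(β,η) − (α,η)(β,ξ)`. -/
noncomputable def bracket {V : Type*} [NormedAddCommGroup V] [InnerProductSpace ℝ V]
    (ξ η α β : V) : ℝ :=
  ⟪α, ξ⟫ * ⟪β, η⟫ - ⟪α, η⟫ * ⟪β, ξ⟫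

/-- The generalized Dunkl operator
`(∇_ξ F)(x) = (∂_ξ F)(x) + (1/2) Σ_{α∈R} (α,ξ) f_α((α,x)) F(s_α x)`. -/
noncomputable def genDunklOp {V : Type*} [NormedAddCommGroup V] [InnerProductSpace ℝ V]
    (R : Finset V) (f : V → ℝ → ℝ) (ξ : V) (F : V → ℝ) (x : V) : ℝ :=
  fderiv ℝ F x ξ + (1 / 2) * ∑ α ∈ R, ⟪α, ξ⟫ * f α ⟪α, x⟫ * F (reflectIn α x)


section Refl
variable {V : Type*} [NormedAddCommGroup V] [InnerProductSpace ℝ V]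

/-- reflectIn as a continuous linear map. -/
noncomputable def reflCLM (α : V) : V →L[ℝ] V :=
  ContinuousLinearMap.id ℝ V - (2 / ⟪α, α⟫) • (innerSL ℝ α).smulRight α

lemma reflCLM_apply (α x : V) : reflCLM α x = reflectIn α x := by
  simp only [reflCLM, reflectIn, ContinuousLinearMap.sub_apply, ContinuousLinearMap.id_apply,
    ContinuousLinearMap.smul_apply, ContinuousLinearMap.smulRight_apply, innerSL_apply_apply,
    smul_smul]
  congr 1
  ring

lemma inner_reflect_right (α β x : V) : ⟪β, reflectIn α x⟫ = ⟪reflectIn α β, x⟫ := by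
  simp only [reflectIn, inner_sub_right, inner_sub_left, real_inner_smul_right,
    real_inner_smul_left]
  rw [real_inner_comm α β]
  ring

lemma inner_reflect_self (α x : V) (hα : ⟪α, α⟫ ≠ 0) : ⟪α, reflectIn α x⟫ = -⟪α, x⟫ := by
  simp only [reflectIn, inner_sub_right, real_inner_smul_right]
  field_simp
  ring

lemma reflect_reflect (α x : V) (hα : ⟪α, α⟫ ≠ 0) : reflectIn α (reflectIn α x) = x := by
  have h := inner_reflect_self α x hα
  simp only [reflectIn] at h ⊢
  rw [h]
  module

lemma inner_reflect_reflect (α : V) (hα : ⟪α, α⟫ ≠ 0) (x y : V) :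
    ⟪reflectIn α x, reflectIn α y⟫ = ⟪x, y⟫ := by
  rw [inner_reflect_right, reflect_reflect _ _ hα]

lemma norm_reflect (α : V) (hα : ⟪α, α⟫ ≠ 0) (x : V) : ‖reflectIn α x‖ = ‖x‖ := by
  have := inner_reflect_reflect α hα x x
  rw [real_inner_self_eq_norm_sq, real_inner_self_eq_norm_sq] at this
  nlinarith [norm_nonneg (reflectIn α x), norm_nonneg x]

end Refl

section Iso
variable {V : Type*} [NormedAddCommGroup V] [InnerProductSpace ℝ V]

/-- `reflectIn α` as a linear isometry equivalence (for `⟪α,α⟫ ≠ 0`). -/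
noncomputable def reflIso (α : V) (hα : ⟪α, α⟫ ≠ 0) : V ≃ₗᵢ[ℝ] V where
  toLinearEquiv := LinearEquiv.ofInvolutive ((reflCLM α : V →L[ℝ] V) : V →ₗ[ℝ] V)
    (fun x => by simpa only [ContinuousLinearMap.coe_coe, reflCLM_apply]
      using reflect_reflect α x hα)
  norm_map' := fun x => by
    show ‖(reflCLM α : V →ₗ[ℝ] V) x‖ = ‖x‖
    simp only [ContinuousLinearMap.coe_coe, reflCLM_apply]
    exact norm_reflect α hα x

lemma reflIso_apply (α : V) (hα : ⟪α, α⟫ ≠ 0) (x : V) : reflIso α hα x = reflectIn α x := by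
  show ((reflCLM α : V →ₗ[ℝ] V) x) = reflectIn α x
  simp only [ContinuousLinearMap.coe_coe, reflCLM_apply]

end Iso

section Main
variable {V : Type*} [NormedAddCommGroup V] [InnerProductSpace ℝ V]
variable (R : Finset V) (f : V → ℝ → ℝ)

def Uset (R : Finset V) : Set V := {x : V | ∀ α ∈ R, ⟪α, x⟫ ≠ 0}

lemma isOpen_Uset : IsOpen (Uset R) := by
  have : Uset R = ⋂ α ∈ R, {x : V | ⟪α, x⟫ ≠ 0} := by ext x; simp [Uset]
  rw [this]
  refine isOpen_biInter_finset fun α _ => ?_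
  have : {x : V | ⟪α, x⟫ ≠ 0} = (fun x => ⟪α, x⟫) ⁻¹' ({0}ᶜ) := rfl
  rw [this]
  exact (isOpen_compl_singleton).preimage (innerSL ℝ α).continuous

variable {R}

lemma reflect_mem_Uset (hrefl : ∀ α ∈ R, ∀ β ∈ R, reflectIn α β ∈ R)
    {α : V} (hα : α ∈ R) {x : V} (hx : x ∈ Uset R) : reflectIn α x ∈ Uset R := by
  intro β hβ
  rw [inner_reflect_right]
  exact hx _ (hrefl α hα β hβ)

variable {f}

/-- Derivative of the Dunkl operator applied to a smooth function. -/
lemma fderiv_dunkl_apply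
    (hrefl : ∀ α ∈ R, ∀ β ∈ R, reflectIn α β ∈ R)
    (hsmooth : ∀ α ∈ R, ContDiffOn ℝ (⊤ : ℕ∞) (f α) {z : ℝ | z ≠ 0})
    {F : V → ℝ} (hF : ContDiffOn ℝ (⊤ : ℕ∞) F (Uset R))
    {x : V} (hx : x ∈ Uset R) (ξ η : V) :
    fderiv ℝ (genDunklOp R f η F) x ξ =
      fderiv ℝ (fderiv ℝ F) x ξ η
      + (1 / 2) * ∑ α ∈ R, ⟪α, η⟫ *
          (deriv (f α) ⟪α, x⟫ * ⟪α, ξ⟫ * F (reflectIn α x)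
            + f α ⟪α, x⟫ * fderiv ℝ F (reflectIn α x) (reflectIn α ξ)) := by
  have hUopen := isOpen_Uset R
  have hUmem : Uset R ∈ nhds x := hUopen.mem_nhds hx
  -- differentiability of F at points of U
  have hFat : ∀ y ∈ Uset R, ContDiffAt ℝ (⊤ : ℕ∞) F y := fun y hy =>
    hF.contDiffAt (hUopen.mem_nhds hy)
  -- piece 1 : y ↦ fderiv F y η
  have hfd : DifferentiableAt ℝ (fderiv ℝ F) x :=
    ((hFat x hx).fderiv_right (m := 1) (by exact WithTop.coe_le_coe.mpr le_top)).differentiableAt one_ne_zero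
  have hP1 : HasFDerivAt (fun y => fderiv ℝ F y η)
      ((ContinuousLinearMap.apply ℝ ℝ η).comp (fderiv ℝ (fderiv ℝ F) x)) x :=
    (ContinuousLinearMap.apply ℝ ℝ η).hasFDerivAt.comp x hfd.hasFDerivAt
  -- pieces 2 (per α)
  have hP2 : ∀ α ∈ R, HasFDerivAt
      (fun y => ⟪α, η⟫ * f α ⟪α, y⟫ * F (reflectIn α y))
      (⟪α, η⟫ • ((f α ⟪α, x⟫ • ((fderiv ℝ F (reflectIn α x)).comp (reflCLM α)))
        + (F (reflectIn α x) • (deriv (f α) ⟪α, x⟫ • (innerSL ℝ α : V →L[ℝ] ℝ))))) x := by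
    intro α hα
    have hin : ⟪α, x⟫ ≠ 0 := hx α hα
    have hfα : HasDerivAt (f α) (deriv (f α) ⟪α, x⟫) ⟪α, x⟫ := by
      have : ContDiffAt ℝ (⊤ : ℕ∞) (f α) ⟪α, x⟫ := (hsmooth α hα).contDiffAt
        (isOpen_ne.mem_nhds hin)
      exact (this.differentiableAt (by simp)).hasDerivAt
    have hInner : HasFDerivAt (fun y : V => ⟪α, y⟫) (innerSL ℝ α : V →L[ℝ] ℝ) x :=
      (innerSL ℝ α).hasFDerivAt
    have hA : HasFDerivAt (fun y => f α ⟪α, y⟫)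
        (deriv (f α) ⟪α, x⟫ • (innerSL ℝ α : V →L[ℝ] ℝ)) x :=
      hfα.comp_hasFDerivAt x hInner
    have hFr : HasFDerivAt F (fderiv ℝ F (reflCLM α x)) (reflCLM α x) := by
      rw [reflCLM_apply]
      exact (((hFat _ (reflect_mem_Uset hrefl hα hx))).differentiableAt (by simp)).hasFDerivAt
    have hB : HasFDerivAt (fun y => F (reflectIn α y))
        ((fderiv ℝ F (reflectIn α x)).comp (reflCLM α)) x := by
      have h0 := hFr.comp x ((reflCLM α).hasFDerivAt)
      simpa [Function.comp_def, reflCLM_apply] using h0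
    have := ((hA.mul hB).const_mul ⟪α, η⟫)
    simpa [mul_assoc] using this
  -- assemble
  have hsum : HasFDerivAt (fun y => ∑ α ∈ R, ⟪α, η⟫ * f α ⟪α, y⟫ * F (reflectIn α y))
      (∑ α ∈ R, ⟪α, η⟫ • ((f α ⟪α, x⟫ • ((fderiv ℝ F (reflectIn α x)).comp (reflCLM α)))
        + (F (reflectIn α x) • (deriv (f α) ⟪α, x⟫ • (innerSL ℝ α : V →L[ℝ] ℝ))))) x :=
    HasFDerivAt.fun_sum hP2
  have htot : HasFDerivAt (genDunklOp R f η F)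
      (((ContinuousLinearMap.apply ℝ ℝ η).comp (fderiv ℝ (fderiv ℝ F) x))
        + (1 / 2 : ℝ) • (∑ α ∈ R, ⟪α, η⟫ • ((f α ⟪α, x⟫ •
            ((fderiv ℝ F (reflectIn α x)).comp (reflCLM α)))
          + (F (reflectIn α x) • (deriv (f α) ⟪α, x⟫ • (innerSL ℝ α : V →L[ℝ] ℝ)))))) x := by
    exact hP1.add (hsum.const_mul (1 / 2 : ℝ))
  rw [htot.fderiv]
  simp only [ContinuousLinearMap.add_apply, ContinuousLinearMap.comp_apply,
    ContinuousLinearMap.smul_apply, ContinuousLinearMap.sum_apply, smul_eq_mul,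
    ContinuousLinearMap.apply_apply, innerSL_apply_apply, reflCLM_apply]
  simp only [Finset.mul_sum]
  congr 1
  exact Finset.sum_congr rfl fun α hα => by ring

lemma dunkl_dunkl
    (hrefl : ∀ α ∈ R, ∀ β ∈ R, reflectIn α β ∈ R)
    (hsmooth : ∀ α ∈ R, ContDiffOn ℝ (⊤ : ℕ∞) (f α) {z : ℝ | z ≠ 0})
    {F : V → ℝ} (hF : ContDiffOn ℝ (⊤ : ℕ∞) F (Uset R))
    {x : V} (hx : x ∈ Uset R) (ξ η : V) :
    genDunklOp R f ξ (genDunklOp R f η F) x =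
      fderiv ℝ (fderiv ℝ F) x ξ η
      + (1 / 2) * ∑ α ∈ R, ⟪α, η⟫ *
          (deriv (f α) ⟪α, x⟫ * ⟪α, ξ⟫ * F (reflectIn α x)
            + f α ⟪α, x⟫ * fderiv ℝ F (reflectIn α x) (reflectIn α ξ))
      + (1 / 2) * ∑ α ∈ R, ⟪α, ξ⟫ * f α ⟪α, x⟫ * fderiv ℝ F (reflectIn α x) η
      + (1 / 4) * ∑ α ∈ R, ∑ β ∈ R, ⟪α, ξ⟫ * ⟪β, η⟫ *
          (f α ⟪α, x⟫ * (f β ⟪reflectIn α β, x⟫ * F (reflectIn β (reflectIn α x)))) := by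
  have hexp : ∀ α ∈ R, ⟪α, ξ⟫ * f α ⟪α, x⟫ * genDunklOp R f η F (reflectIn α x)
      = ⟪α, ξ⟫ * f α ⟪α, x⟫ * fderiv ℝ F (reflectIn α x) η
        + (1 / 2) * ∑ β ∈ R, ⟪α, ξ⟫ * ⟪β, η⟫ *
            (f α ⟪α, x⟫ * (f β ⟪reflectIn α β, x⟫ * F (reflectIn β (reflectIn α x)))) := by
    intro α hα
    rw [genDunklOp]
    simp only [inner_reflect_right, Finset.mul_sum, mul_add]
    congr 1
    exact Finset.sum_congr rfl fun β hβ => by ring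
  have h0 : genDunklOp R f ξ (genDunklOp R f η F) x
      = fderiv ℝ (genDunklOp R f η F) x ξ
        + (1 / 2) * ∑ α ∈ R, ⟪α, ξ⟫ * f α ⟪α, x⟫ * genDunklOp R f η F (reflectIn α x) := rfl
  rw [h0, fderiv_dunkl_apply hrefl hsmooth hF hx ξ η, Finset.sum_congr rfl hexp,
    Finset.sum_add_distrib, ← Finset.mul_sum]
  ring

lemma commutator_eq
    (hrefl : ∀ α ∈ R, ∀ β ∈ R, reflectIn α β ∈ R)
    (hsmooth : ∀ α ∈ R, ContDiffOn ℝ (⊤ : ℕ∞) (f α) {z : ℝ | z ≠ 0})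
    {F : V → ℝ} (hF : ContDiffOn ℝ (⊤ : ℕ∞) F (Uset R))
    {x : V} (hx : x ∈ Uset R) (ξ η : V) :
    genDunklOp R f ξ (genDunklOp R f η F) x - genDunklOp R f η (genDunklOp R f ξ F) x
      = (1 / 4) * ∑ α ∈ R, ∑ β ∈ R, bracket ξ η α β *
          (f α ⟪α, x⟫ * (f β ⟪reflectIn α β, x⟫ * F (reflectIn β (reflectIn α x)))) := by
  have hUopen := isOpen_Uset R
  have hsym : fderiv ℝ (fderiv ℝ F) x ξ η = fderiv ℝ (fderiv ℝ F) x η ξ := by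
    have hev : ∀ᶠ y in nhds x, HasFDerivAt F (fderiv ℝ F y) y := by
      filter_upwards [hUopen.mem_nhds hx] with y hy
      exact (((hF.contDiffAt (hUopen.mem_nhds hy))).differentiableAt (by simp)).hasFDerivAt
    have hfd : DifferentiableAt ℝ (fderiv ℝ F) x :=
      ((hF.contDiffAt (hUopen.mem_nhds hx)).fderiv_right (m := 1) (by exact WithTop.coe_le_coe.mpr le_top)).differentiableAt one_ne_zero
    exact second_derivative_symmetric_of_eventually hev hfd.hasFDerivAt ξ η
  have hfo : ∀ α ∈ R,
      (⟪α, η⟫ * (deriv (f α) ⟪α, x⟫ * ⟪α, ξ⟫ * F (reflectIn α x)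
          + f α ⟪α, x⟫ * fderiv ℝ F (reflectIn α x) (reflectIn α ξ))
        + ⟪α, ξ⟫ * f α ⟪α, x⟫ * fderiv ℝ F (reflectIn α x) η)
      - (⟪α, ξ⟫ * (deriv (f α) ⟪α, x⟫ * ⟪α, η⟫ * F (reflectIn α x)
          + f α ⟪α, x⟫ * fderiv ℝ F (reflectIn α x) (reflectIn α η))
        + ⟪α, η⟫ * f α ⟪α, x⟫ * fderiv ℝ F (reflectIn α x) ξ) = 0 := by
    intro α hα
    have hrw : ∀ v : V, fderiv ℝ F (reflectIn α x) (reflectIn α v)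
        = fderiv ℝ F (reflectIn α x) v
          - 2 * ⟪α, v⟫ / ⟪α, α⟫ * fderiv ℝ F (reflectIn α x) α := by
      intro v
      have hv : reflectIn α v = v - (2 * ⟪α, v⟫ / ⟪α, α⟫) • α := rfl
      rw [hv, map_sub, map_smul, smul_eq_mul]
    rw [hrw ξ, hrw η]
    ring
  have h12 : ((∑ α ∈ R, ⟪α, η⟫ *
          (deriv (f α) ⟪α, x⟫ * ⟪α, ξ⟫ * F (reflectIn α x)
            + f α ⟪α, x⟫ * fderiv ℝ F (reflectIn α x) (reflectIn α ξ)))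
        + ∑ α ∈ R, ⟪α, ξ⟫ * f α ⟪α, x⟫ * fderiv ℝ F (reflectIn α x) η)
      - ((∑ α ∈ R, ⟪α, ξ⟫ *
          (deriv (f α) ⟪α, x⟫ * ⟪α, η⟫ * F (reflectIn α x)
            + f α ⟪α, x⟫ * fderiv ℝ F (reflectIn α x) (reflectIn α η)))
        + ∑ α ∈ R, ⟪α, η⟫ * f α ⟪α, x⟫ * fderiv ℝ F (reflectIn α x) ξ) = 0 := by
    rw [← Finset.sum_add_distrib, ← Finset.sum_add_distrib, ← Finset.sum_sub_distrib]
    exact Finset.sum_eq_zero hfo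
  have h4 : (∑ α ∈ R, ∑ β ∈ R, ⟪α, ξ⟫ * ⟪β, η⟫ *
          (f α ⟪α, x⟫ * (f β ⟪reflectIn α β, x⟫ * F (reflectIn β (reflectIn α x)))))
      - (∑ α ∈ R, ∑ β ∈ R, ⟪α, η⟫ * ⟪β, ξ⟫ *
          (f α ⟪α, x⟫ * (f β ⟪reflectIn α β, x⟫ * F (reflectIn β (reflectIn α x)))))
      = ∑ α ∈ R, ∑ β ∈ R, bracket ξ η α β *
          (f α ⟪α, x⟫ * (f β ⟪reflectIn α β, x⟫ * F (reflectIn β (reflectIn α x)))) := by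
    rw [← Finset.sum_sub_distrib]
    refine Finset.sum_congr rfl fun α hα => ?_
    rw [← Finset.sum_sub_distrib]
    refine Finset.sum_congr rfl fun β hβ => ?_
    rw [bracket]
    ring
  rw [dunkl_dunkl hrefl hsmooth hF hx ξ η, dunkl_dunkl hrefl hsmooth hF hx η ξ]
  linear_combination hsym + (1 / 2 : ℝ) * h12 + (1 / 4 : ℝ) * h4

end Main

section Directions
variable {V : Type*} [NormedAddCommGroup V] [InnerProductSpace ℝ V]
variable {R : Finset V} {f : V → ℝ → ℝ}

/-- If (b) holds then the grouped zero-order sum vanishes. -/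
lemma grouped_sum_vanish
    (h0 : (0 : V) ∉ R)
    (hb : ∀ w : V ≃ₗᵢ[ℝ] V, ∀ ξ η : V, ∀ x ∈ Uset R,
        ∑ p ∈ R ×ˢ R,
          (if (∀ y : V, reflectIn p.1 (reflectIn p.2 y) = w y) then
            bracket ξ η p.1 p.2 * f p.1 ⟪p.1, x⟫ * f p.2 ⟪reflectIn p.1 p.2, x⟫
          else 0) = 0)
    (ξ η : V) {x : V} (hx : x ∈ Uset R) (F : V → ℝ) :
    ∑ p ∈ R ×ˢ R, bracket ξ η p.1 p.2 *
        (f p.1 ⟪p.1, x⟫ * (f p.2 ⟪reflectIn p.1 p.2, x⟫ *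
          F (reflectIn p.2 (reflectIn p.1 x)))) = 0 := by
  classical
  have hnz : ∀ q : V × V, q ∈ R ×ˢ R → ⟪q.1, q.1⟫ ≠ 0 ∧ ⟪q.2, q.2⟫ ≠ 0 := by
    intro q hq
    exact ⟨inner_self_ne_zero.mpr (fun h => h0 (h ▸ (Finset.mem_product.mp hq).1)),
      inner_self_ne_zero.mpr (fun h => h0 (h ▸ (Finset.mem_product.mp hq).2))⟩
  set g : V × V → (V → V) := fun p => fun y => reflectIn p.1 (reflectIn p.2 y) with hg
  have hfix : ∀ q : V × V, q ∈ R ×ˢ R → ∀ z : V,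
      reflectIn q.2 (reflectIn q.1 (g q z)) = z := by
    intro q hq z
    show reflectIn q.2 (reflectIn q.1 (reflectIn q.1 (reflectIn q.2 z))) = z
    rw [reflect_reflect q.1 _ (hnz q hq).1, reflect_reflect q.2 _ (hnz q hq).2]
  have hfix' : ∀ q : V × V, q ∈ R ×ˢ R → ∀ z : V,
      g q (reflectIn q.2 (reflectIn q.1 z)) = z := by
    intro q hq z
    show reflectIn q.1 (reflectIn q.2 (reflectIn q.2 (reflectIn q.1 z))) = z
    rw [reflect_reflect q.2 _ (hnz q hq).2, reflect_reflect q.1 _ (hnz q hq).1]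
  have hmaps : ∀ p ∈ R ×ˢ R, g p ∈ (R ×ˢ R).image g := fun p hp => Finset.mem_image_of_mem g hp
  rw [← Finset.sum_fiberwise_of_maps_to hmaps]
  refine Finset.sum_eq_zero fun j hj => ?_
  obtain ⟨p₀, hp₀, hgp₀⟩ := Finset.mem_image.mp hj
  have hs1 := (hnz p₀ hp₀).1
  have hs2 := (hnz p₀ hp₀).2
  -- all points in the fiber coincide
  have hpt : ∀ p ∈ (R ×ˢ R).filter (fun p => g p = j),
      reflectIn p.2 (reflectIn p.1 x) = reflectIn p₀.2 (reflectIn p₀.1 x) := by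
    intro p hp
    obtain ⟨hpmem, hpg⟩ := Finset.mem_filter.mp hp
    have e1 : reflectIn p₀.2 (reflectIn p₀.1 x)
        = reflectIn p₀.2 (reflectIn p₀.1 (g p₀ (reflectIn p.2 (reflectIn p.1 x)))) := by
      rw [hgp₀, ← hpg, hfix' p hpmem x]
    rw [e1, hfix p₀ hp₀]
  calc ∑ p ∈ (R ×ˢ R).filter (fun p => g p = j), bracket ξ η p.1 p.2 *
        (f p.1 ⟪p.1, x⟫ * (f p.2 ⟪reflectIn p.1 p.2, x⟫ * F (reflectIn p.2 (reflectIn p.1 x))))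
      = (∑ p ∈ (R ×ˢ R).filter (fun p => g p = j),
          bracket ξ η p.1 p.2 * f p.1 ⟪p.1, x⟫ * f p.2 ⟪reflectIn p.1 p.2, x⟫)
        * F (reflectIn p₀.2 (reflectIn p₀.1 x)) := by
        rw [Finset.sum_mul]
        refine Finset.sum_congr rfl fun p hp => ?_
        rw [hpt p hp]; ring
    _ = 0 := by
        rw [mul_eq_zero]
        left
        set w : V ≃ₗᵢ[ℝ] V := (reflIso p₀.2 hs2).trans (reflIso p₀.1 hs1) with hw
        have hweq : ∀ y : V, w y = g p₀ y := by
          intro y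
          simp only [hw, LinearIsometryEquiv.trans_apply, reflIso_apply]
          rfl
        have hb0 := hb w ξ η x hx
        rw [Finset.sum_filter, ← hb0]
        refine Finset.sum_congr rfl fun p hp => ?_
        congr 1
        simp only [eq_iff_iff]
        constructor
        · intro hcond y
          rw [hweq y]
          show g p y = g p₀ y
          rw [hcond, hgp₀]
        · intro hcond
          funext y
          rw [← hgp₀]
          show g p y = g p₀ y
          rw [← hweq y]
          exact hcond y

end Directions

section DirA
variable {V : Type*} [NormedAddCommGroup V] [InnerProductSpace ℝ V]
variable {R : Finset V} {f : V → ℝ → ℝ}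

lemma cond_symm {p : V × V} (h1 : ⟪p.1, p.1⟫ ≠ 0) (h2 : ⟪p.2, p.2⟫ ≠ 0) (w : V ≃ₗᵢ[ℝ] V) :
    (∀ y : V, reflectIn p.1 (reflectIn p.2 y) = w y) ↔
    (∀ y : V, reflectIn p.2 (reflectIn p.1 y) = w.symm y) := by
  constructor
  · intro h y
    have hz := h (reflectIn p.2 (reflectIn p.1 y))
    rw [reflect_reflect p.2 _ h2, reflect_reflect p.1 _ h1] at hz
    conv_rhs => rw [hz]
    rw [LinearIsometryEquiv.symm_apply_apply]
  · intro h y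
    have hz := h (reflectIn p.1 (reflectIn p.2 y))
    rw [reflect_reflect p.1 _ h1, reflect_reflect p.2 _ h2] at hz
    conv_rhs => rw [hz]
    rw [LinearIsometryEquiv.apply_symm_apply]

lemma dense_biInter_finset {X : Type*} [TopologicalSpace X] {ι : Type*} (s : Finset ι)
    (A : ι → Set X) (h : ∀ i ∈ s, IsOpen (A i) ∧ Dense (A i)) :
    Dense (⋂ i ∈ s, A i) := by
  classical
  induction s using Finset.induction_on with
  | empty => simp [dense_univ]
  | @insert a s ha ih =>
    rw [Finset.set_biInter_insert]
    refine Dense.inter_of_isOpen_left ((h a (Finset.mem_insert_self a s)).2)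
      (ih fun i hi => h i (Finset.mem_insert_of_mem hi))
      ((h a (Finset.mem_insert_self a s)).1)

/-- direction (a) → (b) -/
lemma feq_of_commute
    (h0 : (0 : V) ∉ R)
    (hrefl : ∀ α ∈ R, ∀ β ∈ R, reflectIn α β ∈ R)
    (hsmooth : ∀ α ∈ R, ContDiffOn ℝ (⊤ : ℕ∞) (f α) {z : ℝ | z ≠ 0})
    (ha : ∀ ξ η : V, ∀ F : V → ℝ, ContDiffOn ℝ (⊤ : ℕ∞) F (Uset R) → ∀ x ∈ Uset R,
        genDunklOp R f ξ (genDunklOp R f η F) x = genDunklOp R f η (genDunklOp R f ξ F) x)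
    (w : V ≃ₗᵢ[ℝ] V) (ξ η : V) {x₀ : V} (hx₀ : x₀ ∈ Uset R) :
    ∑ p ∈ R ×ˢ R, (if (∀ y : V, reflectIn p.1 (reflectIn p.2 y) = w y) then
        bracket ξ η p.1 p.2 * f p.1 ⟪p.1, x₀⟫ * f p.2 ⟪reflectIn p.1 p.2, x₀⟫ else 0) = 0 := by
  classical
  have hnz : ∀ q : V × V, q ∈ R ×ˢ R → ⟪q.1, q.1⟫ ≠ 0 ∧ ⟪q.2, q.2⟫ ≠ 0 := by
    intro q hq
    exact ⟨inner_self_ne_zero.mpr (fun h => h0 (h ▸ (Finset.mem_product.mp hq).1)),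
      inner_self_ne_zero.mpr (fun h => h0 (h ▸ (Finset.mem_product.mp hq).2))⟩
  set Φ : V → ℝ := fun x => ∑ p ∈ R ×ˢ R,
      (if (∀ y : V, reflectIn p.1 (reflectIn p.2 y) = w y) then
        bracket ξ η p.1 p.2 * f p.1 ⟪p.1, x⟫ * f p.2 ⟪reflectIn p.1 p.2, x⟫ else 0) with hΦ
  -- continuity of Φ on U
  have hcont : ∀ z ∈ Uset R, ContinuousAt Φ z := by
    intro z hz
    refine tendsto_finset_sum _ fun p hp => ?_
    by_cases hc : ∀ y : V, reflectIn p.1 (reflectIn p.2 y) = w y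
    · simp only [if_pos hc]
      have hp1 : p.1 ∈ R := (Finset.mem_product.mp hp).1
      have hp2 : p.2 ∈ R := (Finset.mem_product.mp hp).2
      have hγ : reflectIn p.1 p.2 ∈ R := hrefl p.1 hp1 p.2 hp2
      have c1 : ContinuousAt (fun x : V => f p.1 ⟪p.1, x⟫) z :=
        (((hsmooth p.1 hp1).contDiffAt (isOpen_ne.mem_nhds (hz _ hp1))).continuousAt).comp
          ((innerSL ℝ p.1).continuous.continuousAt)
      have c2 : ContinuousAt (fun x : V => f p.2 ⟪reflectIn p.1 p.2, x⟫) z :=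
        (((hsmooth p.2 hp2).contDiffAt (isOpen_ne.mem_nhds (hz _ hγ))).continuousAt).comp
          ((innerSL ℝ (reflectIn p.1 p.2)).continuous.continuousAt)
      exact ((continuousAt_const.mul c1).mul c2)
    · simp only [if_neg hc]
      exact tendsto_const_nhds
  -- generic set
  set T : V →L[ℝ] V := w.symm.toLinearIsometry.toContinuousLinearMap with hT
  have hTapp : ∀ y : V, T y = w.symm y := fun y => rfl
  set M := (R ×ˢ R).filter
      (fun p => ¬ (∀ y : V, reflectIn p.2 (reflectIn p.1 y) = w.symm y)) with hM
  set A : V × V → Set V := fun p => {x : V | reflectIn p.2 (reflectIn p.1 x) ≠ w.symm x} with hA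
  have hAp : ∀ p ∈ M, IsOpen (A p) ∧ Dense (A p) := by
    intro p hp
    obtain ⟨hpmem, hpne⟩ := Finset.mem_filter.mp hp
    set D : V →L[ℝ] V := (reflCLM p.2).comp (reflCLM p.1) - T with hD
    have hDapp : ∀ y : V, D y = reflectIn p.2 (reflectIn p.1 y) - w.symm y := by
      intro y
      have h1 : D y = (reflCLM p.2) ((reflCLM p.1) y) - T y := rfl
      rw [h1, reflCLM_apply, reflCLM_apply, hTapp y]
    have hker : A p = ((LinearMap.ker (D : V →ₗ[ℝ] V) : Submodule ℝ V) : Set V)ᶜ := by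
      ext y
      simp only [hA, Set.mem_setOf_eq, Set.mem_compl_iff, SetLike.mem_coe, LinearMap.mem_ker,
        ContinuousLinearMap.coe_coe]
      constructor
      · intro hne hDy
        refine hne (sub_eq_zero.mp ?_)
        rw [← hDapp y]; exact hDy
      · intro hnker heq
        exact hnker (by rw [hDapp y, heq, sub_self])
    constructor
    · rw [hker]
      exact isOpen_compl_iff.mpr (ContinuousLinearMap.isClosed_ker D)
    · rw [hker]
      have hne : LinearMap.ker (D : V →ₗ[ℝ] V) ≠ ⊤ := by
        intro htop
        apply hpne
        intro y
        have hymem : y ∈ LinearMap.ker (D : V →ₗ[ℝ] V) := htop.symm ▸ Submodule.mem_top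
        have hDy : D y = 0 := hymem
        refine sub_eq_zero.mp ?_
        rw [← hDapp y]; exact hDy
      have hint : interior ((LinearMap.ker (D : V →ₗ[ℝ] V) : Submodule ℝ V) : Set V) = ∅ := by
        by_contra hne2
        exact hne (Submodule.eq_top_of_nonempty_interior' _
          (Set.nonempty_iff_ne_empty.mpr hne2))
      rw [dense_iff_closure_eq, closure_compl, hint, Set.compl_empty]
  set G := ⋂ p ∈ M, A p with hG
  have hGdense : Dense G := dense_biInter_finset M A hAp
  -- Φ vanishes on U ∩ G
  have hzero : ∀ x, x ∈ Uset R → x ∈ G → Φ x = 0 := by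
    intro x hxU hxG
    set y₀ := w.symm x with hy₀
    set Q : Finset V := ((R ×ˢ R).filter
        (fun p => reflectIn p.2 (reflectIn p.1 x) ≠ y₀)).image
        (fun p => reflectIn p.2 (reflectIn p.1 x)) with hQ
    set F : V → ℝ := fun y => ∏ q ∈ Q, (⟪y - q, y - q⟫ / ⟪y₀ - q, y₀ - q⟫) with hF
    have hQne : ∀ q ∈ Q, q ≠ y₀ := by
      intro q hq
      obtain ⟨p, hpmem, hpq⟩ := Finset.mem_image.mp hq
      exact hpq ▸ (Finset.mem_filter.mp hpmem).2
    have hFsm : ContDiff ℝ (⊤ : ℕ∞) F := by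
      refine contDiff_prod fun q hq => ?_
      exact ((contDiff_id.sub contDiff_const).inner ℝ
        (contDiff_id.sub contDiff_const)).div_const _
    have hF1 : F y₀ = 1 := by
      refine Finset.prod_eq_one fun q hq => ?_
      exact div_self (inner_self_ne_zero.mpr (sub_ne_zero.mpr (hQne q hq).symm))
    have hF0 : ∀ p ∈ R ×ˢ R, reflectIn p.2 (reflectIn p.1 x) ≠ y₀ →
        F (reflectIn p.2 (reflectIn p.1 x)) = 0 := by
      intro p hp hne
      have hqQ : reflectIn p.2 (reflectIn p.1 x) ∈ Q :=
        Finset.mem_image_of_mem _ (Finset.mem_filter.mpr ⟨hp, hne⟩)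
      refine Finset.prod_eq_zero hqQ ?_
      simp
    have hcommeq := commutator_eq hrefl hsmooth (hFsm.contDiffOn) hxU ξ η
    rw [ha ξ η F (hFsm.contDiffOn) x hxU, sub_self] at hcommeq
    have hsum0 : ∑ α ∈ R, ∑ β ∈ R, bracket ξ η α β *
        (f α ⟪α, x⟫ * (f β ⟪reflectIn α β, x⟫ * F (reflectIn β (reflectIn α x)))) = 0 :=
      (mul_eq_zero.mp hcommeq.symm).resolve_left (by norm_num)
    have hsum0' : ∑ p ∈ R ×ˢ R, bracket ξ η p.1 p.2 *
        (f p.1 ⟪p.1, x⟫ * (f p.2 ⟪reflectIn p.1 p.2, x⟫ *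
          F (reflectIn p.2 (reflectIn p.1 x)))) = 0 := by
      rw [Finset.sum_product]; exact hsum0
    simp only [hΦ]
    refine Eq.trans (Finset.sum_congr rfl fun p hp => ?_) hsum0'
    by_cases hc : ∀ y : V, reflectIn p.1 (reflectIn p.2 y) = w y
    · rw [if_pos hc]
      have hpt : reflectIn p.2 (reflectIn p.1 x) = y₀ :=
        (cond_symm (hnz p hp).1 (hnz p hp).2 w).mp hc x
      rw [hpt, hF1]
      ring
    · rw [if_neg hc]
      have hbad : p ∈ M := Finset.mem_filter.mpr ⟨hp, fun hcs =>
        hc ((cond_symm (hnz p hp).1 (hnz p hp).2 w).mpr hcs)⟩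
      have hxA : x ∈ A p := Set.mem_iInter₂.mp hxG p hbad
      have hne : reflectIn p.2 (reflectIn p.1 x) ≠ y₀ := hxA
      rw [hF0 p hp hne]
      ring
  -- take the limit
  have hclos : x₀ ∈ closure (Uset R ∩ G) := by
    rw [mem_closure_iff]
    intro O hO hxO
    obtain ⟨y, hy⟩ := hGdense.inter_open_nonempty _ (hO.inter (isOpen_Uset R)) ⟨x₀, hxO, hx₀⟩
    exact ⟨y, hy.1.1, hy.1.2, hy.2⟩
  have hnb : (nhdsWithin x₀ (Uset R ∩ G)).NeBot := mem_closure_iff_nhdsWithin_neBot.mp hclos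
  have ht1 : Filter.Tendsto Φ (nhdsWithin x₀ (Uset R ∩ G)) (nhds (Φ x₀)) :=
    (hcont x₀ hx₀).tendsto.mono_left nhdsWithin_le_nhds
  have hev : (fun _ : V => (0:ℝ)) =ᶠ[nhdsWithin x₀ (Uset R ∩ G)] Φ := by
    filter_upwards [self_mem_nhdsWithin] with y hy
    exact (hzero y hy.1 hy.2).symm
  have ht2 : Filter.Tendsto Φ (nhdsWithin x₀ (Uset R ∩ G)) (nhds 0) :=
    Filter.Tendsto.congr' hev tendsto_const_nhds
  exact tendsto_nhds_unique ht1 ht2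

end DirA

theorem generalized_dunkl_commute_iff_functional_equations
    {V : Type*} [NormedAddCommGroup V] [InnerProductSpace ℝ V] [FiniteDimensional ℝ V]
    (R : Finset V)
    (h0 : (0 : V) ∉ R)
    (hline : ∀ α ∈ R, ∀ c : ℝ, c • α ∈ R → c • α = α ∨ c • α = -α)
    (hneg : ∀ α ∈ R, -α ∈ R)
    (hrefl : ∀ α ∈ R, ∀ β ∈ R, reflectIn α β ∈ R)
    (f : V → ℝ → ℝ)
    (hsmooth : ∀ α ∈ R, ContDiffOn ℝ (⊤ : ℕ∞) (f α) {z : ℝ | z ≠ 0})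
    (hodd : ∀ α ∈ R, ∀ z : ℝ, z ≠ 0 → f (-α) z = -f α (-z)) :
    (∀ ξ η : V, ∀ F : V → ℝ,
        ContDiffOn ℝ (⊤ : ℕ∞) F {x : V | ∀ α ∈ R, ⟪α, x⟫ ≠ 0} →
        ∀ x ∈ {x : V | ∀ α ∈ R, ⟪α, x⟫ ≠ 0},
          genDunklOp R f ξ (genDunklOp R f η F) x
            = genDunklOp R f η (genDunklOp R f ξ F) x)
      ↔
    (∀ w : V ≃ₗᵢ[ℝ] V, ∀ ξ η : V, ∀ x ∈ {x : V | ∀ α ∈ R, ⟪α, x⟫ ≠ 0},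
        ∑ p ∈ R ×ˢ R,
          (if (∀ y : V, reflectIn p.1 (reflectIn p.2 y) = w y) then
            bracket ξ η p.1 p.2 * f p.1 ⟪p.1, x⟫ * f p.2 ⟪reflectIn p.1 p.2, x⟫
          else 0) = 0) := by
  constructor
  · intro ha w ξ η x hx
    exact feq_of_commute h0 hrefl hsmooth ha w ξ η hx
  · intro hb ξ η F hF x hx
    have h := commutator_eq hrefl hsmooth hF hx ξ η
    have hz := grouped_sum_vanish h0 hb ξ η hx F
    rw [Finset.sum_product] at hz
    rw [hz, mul_zero] at h
    exact sub_eq_zero.mp h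
end

section
/- Let D ⊆ ℂ be an open disc centered at 0 and let f be meromorphic on D, not identically zero, odd (f(−z) = −f(z) wherever defined), and suppose that f(u)f(u+v) − f(v)f(u) + f(u+v)f(v) = 0 for all u, v ∈ ℂ such that u, v, u+v ∈ D and f is analytic at u, v and u+v. Then there is a constant C ≠ 0 such that f(z) = C/z for all z ∈ D ∖ {0} at which f is analytic. -/
/-!
Dividing the functional equation by `f u * f v * f (u + v)` shows that `g = 1 / f` is additive
wherever `f` is analytic and nonzero; since `f` is meromorphic and not identically zero, this holds
off a discrete set. Differentiating `g (u + v) = g u + g v` in `u` makes `g'` invariant under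
translations, hence equal to a constant `c`, so `g z - c z` is locally constant there. The
identity principle for meromorphic functions on the disc makes it a global constant, additivity
forces that constant to vanish, and `f z = c⁻¹ / z` follows by continuity.
-/

open Metric Filter Topology Set

def IsAdditiveOn {α β : Type*} [Add α] [Add β] (g : α → β) (V : Set α) : Prop :=
  ∀ ⦃u v⦄, u ∈ V → v ∈ V → u + v ∈ V → g (u + v) = g u + g v

theorem isAdditiveOn_inv_of_functional_equation {K : Type*} [Field K] {f : K → K} {V : Set K}
    (hf : ∀ z ∈ V, f z ≠ 0)
    (hfe : ∀ u v, u ∈ V → v ∈ V → u + v ∈ V →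
      f u * f (u + v) - f v * f u + f (u + v) * f v = 0) :
    IsAdditiveOn f⁻¹ V := by
  intro u v hu hv huv
  have hu_ne := hf u hu
  have hv_ne := hf v hv
  have huv_ne := hf (u + v) huv
  simp only [Pi.inv_apply]
  field_simp
  linear_combination -hfe u v hu hv huv

theorem eventually_mem_and_add_mem {M : Type*} [TopologicalSpace M] [AddZeroClass M]
    [ContinuousAdd M] {V : Set M} (hV : IsOpen V) (h0 : ∀ᶠ w in 𝓝[≠] (0 : M), w ∈ V) {u : M}
    (hu : u ∈ V) : ∀ᶠ v in 𝓝[≠] (0 : M), v ∈ V ∧ u + v ∈ V := by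
  have hadd : Tendsto (u + ·) (𝓝 0) (𝓝 u) := (continuous_const_add u).tendsto' 0 u (add_zero u)
  exact h0.and ((hadd.eventually (hV.mem_nhds hu)).filter_mono nhdsWithin_le_nhds)

theorem AnalyticAt.eq_of_eventuallyEq_nhdsNE {𝕜 E : Type*} [NontriviallyNormedField 𝕜]
    [NormedAddCommGroup E] [NormedSpace 𝕜 E] {f g : 𝕜 → E} {z : 𝕜} (hf : AnalyticAt 𝕜 f z)
    (hg : AnalyticAt 𝕜 g z) (h : f =ᶠ[𝓝[≠] z] g) : f z = g z :=
  ((hf.frequently_eq_iff_eventually_eq hg).1 h.frequently).self_of_nhds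

namespace MeromorphicOn

variable {𝕜 E : Type*} [NontriviallyNormedField 𝕜] [NormedAddCommGroup E] [NormedSpace 𝕜 E]
  {f g : 𝕜 → E} {U : Set 𝕜} {x y : 𝕜}

theorem eventuallyEq_nhdsNE_of_isPreconnected (hf : MeromorphicOn f U) (hg : MeromorphicOn g U)
    (hU : IsPreconnected U) (hx : x ∈ U) (hy : y ∈ U) (hfg : f =ᶠ[𝓝[≠] x] g) :
    f =ᶠ[𝓝[≠] y] g := by
  rw [eventuallyEq_iff_sub] at hfg ⊢
  refine meromorphicOrderAt_eq_top_iff.1 ?_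
  by_contra hy_ne_top
  exact meromorphicOrderAt_ne_top_of_isPreconnected (hf.sub hg) hU hy hx hy_ne_top
    (meromorphicOrderAt_eq_top_iff.2 hfg)

theorem eventually_analyticAt_and_ne_zero [CompleteSpace E] (hf : MeromorphicOn f U)
    (hU : IsPreconnected U) (hx : x ∈ U) (hfx : AnalyticAt 𝕜 f x) (hfx_ne : f x ≠ 0)
    (hy : y ∈ U) : ∀ᶠ z in 𝓝[≠] y, AnalyticAt 𝕜 f z ∧ f z ≠ 0 := by
  have hx_ne_top : meromorphicOrderAt f x ≠ ⊤ :=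
    (meromorphicOrderAt_ne_top_iff_eventually_ne_zero (hf x hx)).2
      ((hfx.continuousAt.eventually_ne hfx_ne).filter_mono nhdsWithin_le_nhds)
  exact (hf y hy).eventually_analyticAt.and
    ((meromorphicOrderAt_ne_top_iff_eventually_ne_zero (hf y hy)).1
      (meromorphicOrderAt_ne_top_of_isPreconnected hf hU hx hy hx_ne_top))

end MeromorphicOn

namespace IsAdditiveOn

section Deriv

variable {𝕜 E : Type*} [NontriviallyNormedField 𝕜] [NormedAddCommGroup E] [NormedSpace 𝕜 E]
  {g : 𝕜 → E} {V : Set 𝕜} {u v : 𝕜}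

theorem deriv_add_eq (hg : IsAdditiveOn g V) (hV : IsOpen V) (hu : u ∈ V) (hv : v ∈ V)
    (huv : u + v ∈ V) : deriv g (u + v) = deriv g u := by
  have hloc : (fun w ↦ g (w + v)) =ᶠ[𝓝 u] fun w ↦ g w + g v := by
    filter_upwards [hV.mem_nhds hu,
      (continuous_add_const v).continuousAt.preimage_mem_nhds (hV.mem_nhds huv)] with w hw hwv
    exact hg hw hv hwv
  simpa only [deriv_comp_add_const, deriv_add_const] using hloc.deriv_eq

theorem deriv_eq (hg : IsAdditiveOn g V) (hV : IsOpen V) (hu : u ∈ V) (hv : v ∈ V)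
    (huv : u + v ∈ V) : deriv g u = deriv g v :=
  calc deriv g u = deriv g (u + v) := (hg.deriv_add_eq hV hu hv huv).symm
    _ = deriv g (v + u) := by rw [add_comm]
    _ = deriv g v := hg.deriv_add_eq hV hv hu (by rwa [add_comm])

theorem deriv_eq_of_eventually_mem (hg : IsAdditiveOn g V) (hV : IsOpen V)
    (h0 : ∀ᶠ w in 𝓝[≠] (0 : 𝕜), w ∈ V) (hu : u ∈ V) (hv : v ∈ V) : deriv g u = deriv g v := by
  obtain ⟨w, ⟨hw, huw⟩, -, hvw⟩ :=
    ((eventually_mem_and_add_mem hV h0 hu).and (eventually_mem_and_add_mem hV h0 hv)).exists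
  exact (hg.deriv_eq hV hu hw huw).trans (hg.deriv_eq hV hv hw hvw).symm

end Deriv

variable {𝕜 E : Type*} [RCLike 𝕜] [NormedAddCommGroup E] [NormedSpace 𝕜 E]
  {g : 𝕜 → E} {U V : Set 𝕜}

theorem exists_eq_smul (hg : IsAdditiveOn g V) (hgU : MeromorphicOn g U)
    (hU : IsPreconnected U) (hVU : V ⊆ U) (hV : IsOpen V) (hgV : ∀ z ∈ V, AnalyticAt 𝕜 g z)
    (h0 : ∀ᶠ w in 𝓝[≠] (0 : 𝕜), w ∈ V) : ∃ c : E, ∀ z ∈ V, g z = z • c := by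
  obtain ⟨z₀, hz₀⟩ := h0.exists
  set c := deriv g z₀
  set h : 𝕜 → E := fun z ↦ g z - z • c
  have h_add : IsAdditiveOn h V := fun u v hu hv huv ↦ by
    simp only [h, hg hu hv huv, add_smul]
    abel
  have h_analytic : ∀ z ∈ V, AnalyticAt 𝕜 h z := fun z hz ↦
    (hgV z hz).sub (analyticAt_id.smul analyticAt_const)
  have h_deriv : ∀ z ∈ V, deriv h z = 0 := fun z hz ↦ by
    rw [deriv_fun_sub (hgV z hz).differentiableAt (differentiableAt_fun_id.smul_const c),
      deriv_smul_const differentiableAt_fun_id, deriv_id'', one_smul,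
      hg.deriv_eq_of_eventually_mem hV h0 hz hz₀, sub_self]
  obtain ⟨ε, hε, hball⟩ := Metric.isOpen_iff.1 hV z₀ hz₀
  have h_loc : h =ᶠ[𝓝[≠] z₀] fun _ ↦ h z₀ := by
    refine nhdsWithin_le_nhds (Filter.mem_of_superset (ball_mem_nhds z₀ hε) fun w hw ↦ ?_)
    exact isOpen_ball.is_const_of_deriv_eq_zero (convex_ball z₀ ε).isPreconnected
      (fun z hz ↦ (h_analytic z (hball hz)).differentiableAt.differentiableWithinAt)
      (fun z hz ↦ h_deriv z (hball hz)) hw (mem_ball_self hε)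
  have h_const : ∀ z ∈ V, h z = h z₀ := fun z hz ↦
    (h_analytic z hz).eq_of_eventuallyEq_nhdsNE analyticAt_const
      ((hgU.sub fun w _ ↦ (analyticAt_id.smul analyticAt_const).meromorphicAt)
        |>.eventuallyEq_nhdsNE_of_isPreconnected (fun w _ ↦ analyticAt_const.meromorphicAt) hU
          (hVU hz₀) (hVU hz) h_loc)
  have h_zero : h z₀ = 0 := by
    obtain ⟨v, hv, hz₀v⟩ := (eventually_mem_and_add_mem hV h0 hz₀).exists
    have := h_add hz₀ hv hz₀v
    rwa [h_const _ hz₀v, h_const _ hv, left_eq_add] at this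
  exact ⟨c, fun z hz ↦ sub_eq_zero.1 ((h_const z hz).trans h_zero)⟩

end IsAdditiveOn

theorem a_type_invariant_solutions_are_rational_general
    (r : ℝ) (hr : 0 < r) (f : ℂ → ℂ)
    (hmer : MeromorphicOn f (ball (0 : ℂ) r))
    (hne : ∃ z ∈ ball (0 : ℂ) r, AnalyticAt ℂ f z ∧ f z ≠ 0)
    (hfe : ∀ u v : ℂ, u ∈ ball (0 : ℂ) r → v ∈ ball (0 : ℂ) r →
      u + v ∈ ball (0 : ℂ) r →
      AnalyticAt ℂ f u → AnalyticAt ℂ f v → AnalyticAt ℂ f (u + v) →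
      f u * f (u + v) - f v * f u + f (u + v) * f v = 0) :
    ∃ C : ℂ, C ≠ 0 ∧ ∀ z ∈ ball (0 : ℂ) r, z ≠ 0 → AnalyticAt ℂ f z →
      f z = C / z := by
  obtain ⟨z₀, hz₀, hfz₀, hfz₀_ne⟩ := hne
  set V := {z | z ∈ ball (0 : ℂ) r ∧ AnalyticAt ℂ f z ∧ f z ≠ 0}
  have hV_open : IsOpen V := isOpen_iff_mem_nhds.2 fun z ⟨hz, hfz, hfz_ne⟩ ↦ by
    filter_upwards [isOpen_ball.mem_nhds hz, hfz.eventually_analyticAt,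
      hfz.continuousAt.eventually_ne hfz_ne] with w hw hfw hfw_ne using ⟨hw, hfw, hfw_ne⟩
  have hV_nhdsNE : ∀ z ∈ ball (0 : ℂ) r, ∀ᶠ w in 𝓝[≠] z, w ∈ V := fun z hz ↦ by
    filter_upwards [nhdsWithin_le_nhds (isOpen_ball.mem_nhds hz),
      hmer.eventually_analyticAt_and_ne_zero (convex_ball 0 r).isPreconnected hz₀ hfz₀ hfz₀_ne
        hz] with w hw hfw using ⟨hw, hfw⟩
  have hV_add : IsAdditiveOn f⁻¹ V := isAdditiveOn_inv_of_functional_equation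
    (fun z hz ↦ hz.2.2) fun u v hu hv huv ↦ hfe u v hu.1 hv.1 huv.1 hu.2.1 hv.2.1 huv.2.1
  obtain ⟨c, hc⟩ := hV_add.exists_eq_smul hmer.inv (convex_ball 0 r).isPreconnected
    (fun z hz ↦ hz.1) hV_open (fun z hz ↦ hz.2.1.inv hz.2.2) (hV_nhdsNE 0 (mem_ball_self hr))
  have hc_ne : c ≠ 0 := by
    rintro rfl
    simpa [hfz₀_ne] using hc z₀ ⟨hz₀, hfz₀, hfz₀_ne⟩
  refine ⟨c⁻¹, inv_ne_zero hc_ne, fun z hz hz_ne hfz ↦ ?_⟩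
  refine hfz.eq_of_eventuallyEq_nhdsNE (analyticAt_const.div analyticAt_id hz_ne) ?_
  filter_upwards [hV_nhdsNE z hz] with w hw
  have hfw : (f w)⁻¹ = w * c := hc w hw
  rw [← inv_inv (f w), hfw, mul_inv, div_eq_mul_inv, mul_comm]

theorem a_type_invariant_solutions_are_rational
    (r : ℝ) (hr : 0 < r) (f : ℂ → ℂ)
    (hmer : MeromorphicOn f (ball (0 : ℂ) r))
    (hne : ∃ z ∈ ball (0 : ℂ) r, AnalyticAt ℂ f z ∧ f z ≠ 0)
    (hodd : ∀ z ∈ ball (0 : ℂ) r,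
      AnalyticAt ℂ f z → AnalyticAt ℂ f (-z) → f (-z) = -f z)
    (hfe : ∀ u v : ℂ, u ∈ ball (0 : ℂ) r → v ∈ ball (0 : ℂ) r →
      u + v ∈ ball (0 : ℂ) r →
      AnalyticAt ℂ f u → AnalyticAt ℂ f v → AnalyticAt ℂ f (u + v) →
      f u * f (u + v) - f v * f u + f (u + v) * f v = 0) :
    ∃ C : ℂ, C ≠ 0 ∧ ∀ z ∈ ball (0 : ℂ) r, z ≠ 0 → AnalyticAt ℂ f z →
      f z = C / z :=
  a_type_invariant_solutions_are_rational_general r hr f hmer hne hfe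
end

section
/- Let D ⊆ ℂ be an open disc centered at 0, C ∈ ℂ with C ≠ 0, and f meromorphic on D. Suppose f(x)·(C/(x+y) + C/(x−y)) + f(y)·(C/(x+y) − C/(x−y)) = 0 for all x, y ∈ D with x+y ≠ 0, x−y ≠ 0, at which f is analytic. Then there is a constant D′ ∈ ℂ such that f(z) = D′/z for all z ∈ D ∖ {0} at which f is analytic. -/
/-!
STATEMENT 5: If `f` is meromorphic on a disc `D` centered at `0` and satisfies
the `B₂` functional equation with `g(z) = C/z` (`C ≠ 0`), then `f(z) = D′/z`.
-/

open Metric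

theorem b2_with_rational_g_forces_rational_f
    (r : ℝ) (hr : 0 < r) (C : ℂ) (hC : C ≠ 0) (f : ℂ → ℂ)
    (hmer : MeromorphicOn f (ball (0 : ℂ) r))
    (hfe : ∀ x y : ℂ, x ∈ ball (0 : ℂ) r → y ∈ ball (0 : ℂ) r →
      x + y ≠ 0 → x - y ≠ 0 → AnalyticAt ℂ f x → AnalyticAt ℂ f y →
      f x * (C / (x + y) + C / (x - y)) + f y * (C / (x + y) - C / (x - y)) = 0) :
    ∃ D' : ℂ, ∀ z ∈ ball (0 : ℂ) r, z ≠ 0 → AnalyticAt ℂ f z → f z = D' / z := by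
  have key : ∀ x y : ℂ, x ∈ ball (0 : ℂ) r → y ∈ ball (0 : ℂ) r → x + y ≠ 0 → x - y ≠ 0 →
      AnalyticAt ℂ f x → AnalyticAt ℂ f y → x * f x = y * f y := by
    intro x y hx hy hxy hxy' hax hay
    have h := hfe x y hx hy hxy hxy' hax hay
    field_simp at h
    have h2 : (2 * C) * (x * f x - y * f y) = 0 := by linear_combination h
    have h3 := (mul_eq_zero.mp h2).resolve_left (by simpa using hC)
    exact sub_eq_zero.mp h3
  have key2 : ∀ z w : ℂ, z ∈ ball (0 : ℂ) r → w ∈ ball (0 : ℂ) r → z ≠ 0 → w ≠ 0 →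
      AnalyticAt ℂ f z → AnalyticAt ℂ f w → z * f z = w * f w := by
    intro z w hz hw hz0 hw0 haz haw
    by_cases h1 : z + w ≠ 0 ∧ z - w ≠ 0
    · exact key z w hz hw h1.1 h1.2 haz haw
    · -- w = ±z ; find an auxiliary point u near z
      have hwz : w = z ∨ w = -z := by
        rcases not_and_or.mp h1 with h2 | h2
        · right; have := not_not.mp h2; linear_combination this
        · left; have := not_not.mp h2; linear_combination -this
      have hmz : MeromorphicAt f z := hmer z hz
      have hev : ∀ᶠ u in nhdsWithin z {z}ᶜ, AnalyticAt ℂ f u := hmz.eventually_analyticAt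
      have hball : ∀ᶠ u in nhdsWithin z {z}ᶜ, u ∈ ball (0 : ℂ) r :=
        eventually_nhdsWithin_of_eventually_nhds (isOpen_ball.eventually_mem hz)
      have hzneg : z ≠ -z := by
        intro h
        apply hz0
        have h2 : (2 : ℂ) * z = 0 := by linear_combination h
        simpa using h2
      have hne : ∀ᶠ u in nhdsWithin z {z}ᶜ, u ≠ -z :=
        eventually_nhdsWithin_of_eventually_nhds (eventually_ne_nhds hzneg)
      have hne0 : ∀ᶠ u in nhdsWithin z {z}ᶜ, u ≠ 0 :=
        eventually_nhdsWithin_of_eventually_nhds (eventually_ne_nhds hz0)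
      have hnez : ∀ᶠ u in nhdsWithin z {z}ᶜ, u ≠ z :=
        eventually_mem_nhdsWithin.mono fun u hu => hu
      obtain ⟨u, hau, hub, hunegz, hu0, huz⟩ :=
        (hev.and (hball.and (hne.and (hne0.and hnez)))).exists
      have hzu : z * f z = u * f u := by
        apply key z u hz hub _ _ haz hau
        · intro h; exact hunegz (by linear_combination h)
        · intro h; exact huz (by linear_combination -h)
      have huw : u * f u = w * f w := by
        apply key u w hub hw _ _ hau haw
        · rcases hwz with h | h
          · intro hc; rw [h] at hc; exact hunegz (by linear_combination hc)
          · intro hc; rw [h] at hc; exact huz (by linear_combination hc)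
        · rcases hwz with h | h
          · intro hc; rw [h] at hc; exact huz (by linear_combination hc)
          · intro hc; rw [h] at hc; exact hunegz (by linear_combination hc)
      rw [hzu, huw]
  by_cases hex : ∃ z, z ∈ ball (0 : ℂ) r ∧ z ≠ 0 ∧ AnalyticAt ℂ f z
  · obtain ⟨z₀, hz₀b, hz₀0, hz₀a⟩ := hex
    refine ⟨z₀ * f z₀, fun z hz hz0 haz => ?_⟩
    have := key2 z z₀ hz hz₀b hz0 hz₀0 haz hz₀a
    field_simp [hz0]
    linear_combination this
  · exact ⟨0, fun z hz hz0 haz => absurd ⟨z, hz, hz0, haz⟩ hex⟩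
end

section
/- Let f, g be meromorphic on a punctured open disc D ∖ {0} around 0 in ℂ and suppose they satisfy the B₂ functional equation. Then the pair (f̃, g̃) defined by f̃(z) = g(z) and g̃(z) = f(z/2) also satisfies the B₂ functional equation (on the appropriate punctured disc); explicitly, g(u)(f((u+v)/2) + f((u−v)/2)) + g(v)(f((u+v)/2) − f((u−v)/2)) = 0 for all u, v such that all the displayed arguments lie in the relevant domains and the functions are analytic at the points where they are evaluated. -/
/-!
STATEMENT 6: If `(f, g)` satisfies the `B₂` functional equation, so does the
pair `(f̃, g̃) = (g, f(·/2))`; explicitly,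
`g(u)(f((u+v)/2) + f((u−v)/2)) + g(v)(f((u+v)/2) − f((u−v)/2)) = 0`.
-/

/-- The punctured open disc of radius `r` around `0` in `ℂ`. -/
def PDisc (r : ℝ) : Set ℂ := Metric.ball (0 : ℂ) r \ {0}

/-- The pair `(f, g)` satisfies the `B₂` functional equation on the punctured
disc of radius `r`:
`f(x)(g(x+y) + g(x−y)) + f(y)(g(x+y) − g(x−y)) = 0`
whenever `x, y, x+y, x−y` lie in the punctured disc, `f` is analytic at `x`
and `y`, and `g` is analytic at `x+y` and `x−y`. -/
def B2FE (r : ℝ) (f g : ℂ → ℂ) : Prop :=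
  ∀ x y : ℂ, x ∈ PDisc r → y ∈ PDisc r → x + y ∈ PDisc r → x - y ∈ PDisc r →
    AnalyticAt ℂ f x → AnalyticAt ℂ f y →
    AnalyticAt ℂ g (x + y) → AnalyticAt ℂ g (x - y) →
    f x * (g (x + y) + g (x - y)) + f y * (g (x + y) - g (x - y)) = 0

theorem b2_symmetry
    (r : ℝ) (hr : 0 < r) (f g : ℂ → ℂ)
    (hfmer : MeromorphicOn f (PDisc r)) (hgmer : MeromorphicOn g (PDisc r))
    (hfe : B2FE r f g) :
    ∀ u v : ℂ, u ∈ PDisc r → v ∈ PDisc r →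
      (u + v) / 2 ∈ PDisc r → (u - v) / 2 ∈ PDisc r →
      AnalyticAt ℂ g u → AnalyticAt ℂ g v →
      AnalyticAt ℂ f ((u + v) / 2) → AnalyticAt ℂ f ((u - v) / 2) →
      g u * (f ((u + v) / 2) + f ((u - v) / 2))
        + g v * (f ((u + v) / 2) - f ((u - v) / 2)) = 0 := by
  intro u v hu hv hx hy hgu hgv hfx hfy
  have hs : (u + v) / 2 + (u - v) / 2 = u := by ring
  have hd : (u + v) / 2 - (u - v) / 2 = v := by ring
  have h := hfe ((u + v) / 2) ((u - v) / 2) hx hy (by rwa [hs]) (by rwa [hd]) hfx hfy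
    (by rwa [hs]) (by rwa [hd])
  rw [hs, hd] at h
  linear_combination h
end

section
/- Let f, g be meromorphic on a punctured open disc D ∖ {0} around 0 in ℂ satisfying the B₂ functional equation. If f extends holomorphically to 0, or g extends holomorphically to 0, then f vanishes identically or g vanishes identically (the solution is trivial). -/
lemma mem_pdisc {r : ℝ} {z : ℂ} : z ∈ PDisc r ↔ ‖z‖ < r ∧ z ≠ 0 := by
  simp [PDisc, Metric.mem_ball, dist_zero_right]

lemma pdisc_isOpen {r : ℝ} : IsOpen (PDisc r) :=
  Metric.isOpen_ball.sdiff isClosed_singleton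

lemma pdisc_pathConnected {r : ℝ} (hr : 0 < r) : IsPathConnected (PDisc r) := by
  have hrank : 1 < Module.rank ℝ ℂ := by
    rw [Complex.rank_real_complex]; norm_num
  have hsph : IsPathConnected (Metric.sphere (0:ℂ) (r/2)) :=
    isPathConnected_sphere hrank 0 (by positivity)
  have hsub : Metric.sphere (0:ℂ) (r/2) ⊆ PDisc r := by
    intro z hz
    rw [Metric.mem_sphere, dist_zero_right] at hz
    rw [mem_pdisc]
    refine ⟨by rw [hz]; linarith, ?_⟩
    intro h; rw [h] at hz; simp at hz; linarith
  have key : ∀ x ∈ PDisc r, JoinedIn (PDisc r)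
      x ((((r/2) * ‖x‖⁻¹ : ℝ)) • x) ∧ (((r/2) * ‖x‖⁻¹ : ℝ)) • x ∈ Metric.sphere (0:ℂ) (r/2) := by
    intro x hx
    obtain ⟨hxr, hx0⟩ := mem_pdisc.1 hx
    have hnx : (0:ℝ) < ‖x‖ := norm_pos_iff.2 hx0
    set k : ℝ := (r/2) * ‖x‖⁻¹ with hk
    have hkpos : 0 < k := by positivity
    have hkx : k * ‖x‖ = r / 2 := by
      rw [hk, mul_assoc, inv_mul_cancel₀ (ne_of_gt hnx), mul_one]
    have hsphmem : k • x ∈ Metric.sphere (0:ℂ) (r/2) := by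
      rw [Metric.mem_sphere, dist_zero_right, norm_smul, Real.norm_eq_abs,
        abs_of_pos hkpos, hkx]
    refine ⟨?_, hsphmem⟩
    have hball : segment ℝ x (k • x) ⊆ Metric.ball (0:ℂ) r := by
      apply (convex_ball (0:ℂ) r).segment_subset
      · rw [Metric.mem_ball, dist_zero_right]; exact hxr
      · rw [Metric.mem_ball, dist_zero_right]
        have := Metric.mem_sphere.1 hsphmem
        rw [dist_zero_right] at this
        rw [this]; linarith
    have hseg : segment ℝ x (k • x) ⊆ PDisc r := by
      intro z hz
      refine ⟨hball hz, ?_⟩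
      obtain ⟨a, b, ha, hb, hab, rfl⟩ := hz
      have heq : a • x + b • (k • x) = ((a + b * k : ℝ)) • x := by
        rw [smul_smul, ← add_smul]
      rw [Set.mem_singleton_iff, heq]
      have habk : 0 < a + b * k := by
        rcases ha.lt_or_eq with h | h
        · nlinarith
        · have hb1 : b = 1 := by linarith
          rw [← h, hb1]; simpa using hkpos
      simp only [ne_eq, smul_eq_zero, not_or]
      exact ⟨ne_of_gt habk, hx0⟩
    have h1 : x ∈ segment ℝ x (k • x) := left_mem_segment ℝ _ _
    have h2 : k • x ∈ segment ℝ x (k • x) := right_mem_segment ℝ _ _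
    exact (((convex_segment x (k • x)).isPathConnected ⟨x, h1⟩).joinedIn x h1 (k • x) h2).mono hseg
  obtain ⟨p, hp, hjoin⟩ := hsph
  refine ⟨p, hsub hp, ?_⟩
  intro y hy
  obtain ⟨hj, hmem⟩ := key y hy
  exact (hj.trans ((hjoin hmem).mono hsub).symm).symm

open Filter Topology in
lemma merom_eventually_zero_of_frequently {h : ℂ → ℂ} {x : ℂ} (hm : MeromorphicAt h x)
    (hf : ∃ᶠ z in 𝓝[≠] x, h z = 0) : ∀ᶠ z in 𝓝[≠] x, h z = 0 := by
  obtain ⟨n, ha⟩ := hm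
  have hf' : ∃ᶠ z in 𝓝[≠] x, (fun z => (z - x) ^ n • h z) z = 0 := by
    apply hf.mono
    intro z hz
    simp [hz]
  have hev : ∀ᶠ z in 𝓝 x, (fun z => (z - x) ^ n • h z) z = 0 :=
    ha.frequently_zero_iff_eventually_zero.1 hf'
  have hev' : ∀ᶠ z in 𝓝[≠] x, (fun z => (z - x) ^ n • h z) z = 0 :=
    hev.filter_mono nhdsWithin_le_nhds
  have hne : ∀ᶠ z in 𝓝[≠] x, z ≠ x := eventually_mem_nhdsWithin
  filter_upwards [hev', hne] with z h1 h2
  have : (z - x) ^ n ≠ 0 := pow_ne_zero _ (sub_ne_zero.2 h2)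
  simpa [smul_eq_mul, this] using h1

open Filter Topology in
lemma propagate_zero {r : ℝ} (hr : 0 < r) {h : ℂ → ℂ} (hm : MeromorphicOn h (PDisc r))
    {c : ℂ} (hc : c ∈ PDisc r) (h0 : ∀ᶠ w in 𝓝[≠] c, h w = 0) :
    ∀ z ∈ PDisc r, AnalyticAt ℂ h z → h z = 0 := by
  set U : Set ℂ := {z : ℂ | ∀ᶠ w in 𝓝[≠] z, h w = 0} with hU
  have hUopen : IsOpen U := by
    rw [isOpen_iff_mem_nhds]
    intro z hz
    rw [hU, Set.mem_setOf_eq, eventually_nhdsWithin_iff] at hz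
    obtain ⟨T, hT, hTo, hzT⟩ := eventually_nhds_iff.1 hz
    rw [mem_nhds_iff]
    refine ⟨T, ?_, hTo, hzT⟩
    intro w hw
    rw [hU, Set.mem_setOf_eq, eventually_nhdsWithin_iff]
    rcases eq_or_ne w z with rfl | hwz
    · exact eventually_nhds_iff.2 ⟨T, hT, hTo, hzT⟩
    · have h1 : ∀ᶠ v in 𝓝 w, v ∈ T := hTo.eventually_mem hw
      have h2 : ∀ᶠ v in 𝓝 w, v ≠ z := eventually_ne_nhds hwz
      filter_upwards [h1, h2] with v hv1 hv2 _
      exact hT v hv1 hv2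
  -- subtype clopen argument
  have hpre : IsPreconnected (PDisc r) := (pdisc_pathConnected hr).isConnected.isPreconnected
  haveI : PreconnectedSpace (PDisc r) := Subtype.preconnectedSpace hpre
  set S : Set (PDisc r) := Subtype.val ⁻¹' U with hS
  have hSopen : IsOpen S := hUopen.preimage continuous_subtype_val
  have hSclosed : IsClosed S := by
    refine isClosed_of_closure_subset ?_
    intro z hz
    show (z : ℂ) ∈ U
    have hmz : MeromorphicAt h (z : ℂ) := hm z z.2
    refine merom_eventually_zero_of_frequently hmz ?_
    by_cases hzU : (z : ℂ) ∈ U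
    · rw [hU, Set.mem_setOf_eq] at hzU
      exact hzU.frequently
    rw [frequently_iff]
    intro W hW
    obtain ⟨T, hTo, hzT, hTsub⟩ := mem_nhdsWithin.1 hW
    have hT𝓝 : Subtype.val ⁻¹' T ∈ 𝓝 z :=
      (continuous_subtype_val.continuousAt (x := z)).preimage_mem_nhds (hTo.mem_nhds hzT)
    obtain ⟨u, huT, huS⟩ := mem_closure_iff_nhds.1 hz _ hT𝓝
    have huU : (u : ℂ) ∈ U := huS
    have huz : (u : ℂ) ≠ (z : ℂ) := fun h => hzU (h ▸ huU)
    have h1 : ∀ᶠ v in 𝓝[≠] (u : ℂ), h v = 0 := huU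
    have h2 : ∀ᶠ v in 𝓝[≠] (u : ℂ), v ∈ T :=
      (hTo.eventually_mem huT).filter_mono nhdsWithin_le_nhds
    have h3 : ∀ᶠ v in 𝓝[≠] (u : ℂ), v ≠ (z : ℂ) :=
      (eventually_ne_nhds huz).filter_mono nhdsWithin_le_nhds
    obtain ⟨v, hv1, hv2, hv3⟩ := (h1.and (h2.and h3)).exists
    exact ⟨v, hTsub ⟨hv2, hv3⟩, hv1⟩
  have hSuniv : S = Set.univ := by
    have : IsClopen S := ⟨hSclosed, hSopen⟩
    exact this.eq_univ ⟨⟨c, hc⟩, h0⟩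
  intro z hzmem hana
  have hzS : (⟨z, hzmem⟩ : PDisc r) ∈ S := by rw [hSuniv]; trivial
  have hev : ∀ᶠ w in 𝓝[≠] z, h w = 0 := hzS
  have t1 : Tendsto h (𝓝[≠] z) (𝓝 (h z)) :=
    (hana.continuousAt.continuousWithinAt : ContinuousWithinAt h _ z)
  have t2 : Tendsto h (𝓝[≠] z) (𝓝 0) := by
    refine Tendsto.congr' ?_ tendsto_const_nhds
    filter_upwards [hev] with w hw using hw.symm
  exact tendsto_nhds_unique t1 t2

/-- `f` extends holomorphically to `0`. -/
def ExtendsHolomorphicallyToZero (f : ℂ → ℂ) : Prop :=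
  ∃ F : ℂ → ℂ, AnalyticAt ℂ F 0 ∧ ∀ᶠ z in nhdsWithin (0 : ℂ) {(0 : ℂ)}ᶜ, f z = F z

open Filter Topology

/-- From an extension `F` of `f` to `0`: eventually near `0` (punctured), `f` is
analytic and agrees with `F`. -/
lemma extension_eventually {f F : ℂ → ℂ} (hF : AnalyticAt ℂ F 0)
    (hfF : ∀ᶠ z in 𝓝[≠] (0:ℂ), f z = F z) :
    ∀ᶠ y in 𝓝[≠] (0:ℂ), AnalyticAt ℂ f y ∧ f y = F y := by
  have hFana : ∀ᶠ y in 𝓝 (0:ℂ), AnalyticAt ℂ F y := hF.eventually_analyticAt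
  have hfF' : ∀ᶠ y in 𝓝 (0:ℂ), y ≠ (0:ℂ) → f y = F y := by
    have := eventually_nhdsWithin_iff.1 hfF
    filter_upwards [this] with y hy hy' using hy hy'
  have hloc : ∀ᶠ y in 𝓝 (0:ℂ), ∀ᶠ z in 𝓝 y, z ≠ (0:ℂ) → f z = F z :=
    hfF'.eventually_nhds
  have hne : ∀ᶠ y in 𝓝[≠] (0:ℂ), y ≠ (0:ℂ) := eventually_mem_nhdsWithin
  filter_upwards [hloc.filter_mono nhdsWithin_le_nhds,
    hFana.filter_mono nhdsWithin_le_nhds, hne] with y h1 h2 h3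
  have hne' : ∀ᶠ z in 𝓝 y, z ≠ (0:ℂ) := eventually_ne_nhds h3
  have heq : f =ᶠ[𝓝 y] F := by
    filter_upwards [h1, hne'] with z hz1 hz2 using hz1 hz2
  exact ⟨h2.congr heq.symm, heq.eq_of_nhds⟩

lemma eventually_mem_pdisc {r : ℝ} (hr : 0 < r) :
    ∀ᶠ y in 𝓝[≠] (0:ℂ), y ∈ PDisc r := by
  have h1 : ∀ᶠ y in 𝓝 (0:ℂ), y ∈ Metric.ball (0:ℂ) r :=
    Metric.isOpen_ball.eventually_mem (Metric.mem_ball_self hr)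
  have h2 : ∀ᶠ y in 𝓝[≠] (0:ℂ), y ≠ (0:ℂ) := eventually_mem_nhdsWithin
  filter_upwards [h1.filter_mono nhdsWithin_le_nhds, h2] with y hy1 hy2
  exact ⟨hy1, hy2⟩

/-- Case where `f` extends: `f x * g x = 0` at common analytic points. -/
lemma case_f_product {r : ℝ} (hr : 0 < r) {f g F : ℂ → ℂ} (hfe : B2FE r f g)
    (hF : AnalyticAt ℂ F 0) (hfF : ∀ᶠ z in 𝓝[≠] (0:ℂ), f z = F z)
    {x : ℂ} (hx : x ∈ PDisc r) (hfx : AnalyticAt ℂ f x) (hgx : AnalyticAt ℂ g x) :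
    f x * g x = 0 := by
  set l : Filter ℂ := 𝓝[≠] (0:ℂ) with hl
  have tadd : Filter.Tendsto (fun y : ℂ => x + y) (𝓝 0) (𝓝 x) :=
    (continuous_const.add continuous_id).tendsto' 0 x (by simp)
  have tsub : Filter.Tendsto (fun y : ℂ => x - y) (𝓝 0) (𝓝 x) :=
    (continuous_const.sub continuous_id).tendsto' 0 x (by simp)
  have e1 : ∀ᶠ y in l, y ∈ PDisc r := eventually_mem_pdisc hr
  have e2 : ∀ᶠ y in l, x + y ∈ PDisc r :=
    (tadd.eventually (pdisc_isOpen.eventually_mem hx)).filter_mono nhdsWithin_le_nhds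
  have e3 : ∀ᶠ y in l, x - y ∈ PDisc r :=
    (tsub.eventually (pdisc_isOpen.eventually_mem hx)).filter_mono nhdsWithin_le_nhds
  have e4 : ∀ᶠ y in l, AnalyticAt ℂ f y ∧ f y = F y := extension_eventually hF hfF
  have e5 : ∀ᶠ y in l, AnalyticAt ℂ g (x + y) :=
    (tadd.eventually hgx.eventually_analyticAt).filter_mono nhdsWithin_le_nhds
  have e6 : ∀ᶠ y in l, AnalyticAt ℂ g (x - y) :=
    (tsub.eventually hgx.eventually_analyticAt).filter_mono nhdsWithin_le_nhds
  have heq0 : ∀ᶠ y in l,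
      f x * (g (x + y) + g (x - y)) + F y * (g (x + y) - g (x - y)) = 0 := by
    filter_upwards [e1, e2, e3, e4, e5, e6] with y h1 h2 h3 h4 h5 h6
    rw [← h4.2]
    exact hfe x y hx h1 h2 h3 hfx h4.1 h5 h6
  have tg1 : Filter.Tendsto (fun y : ℂ => g (x + y)) l (𝓝 (g x)) :=
    (hgx.continuousAt.tendsto.comp tadd).mono_left nhdsWithin_le_nhds
  have tg2 : Filter.Tendsto (fun y : ℂ => g (x - y)) l (𝓝 (g x)) :=
    (hgx.continuousAt.tendsto.comp tsub).mono_left nhdsWithin_le_nhds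
  have tF : Filter.Tendsto F l (𝓝 (F 0)) :=
    hF.continuousAt.tendsto.mono_left nhdsWithin_le_nhds
  have t1 : Filter.Tendsto
      (fun y : ℂ => f x * (g (x + y) + g (x - y)) + F y * (g (x + y) - g (x - y))) l
      (𝓝 (f x * (g x + g x) + F 0 * (g x - g x))) :=
    (tendsto_const_nhds.mul (tg1.add tg2)).add (tF.mul (tg1.sub tg2))
  have t2 : Filter.Tendsto
      (fun y : ℂ => f x * (g (x + y) + g (x - y)) + F y * (g (x + y) - g (x - y))) l
      (𝓝 0) := by
    refine Filter.Tendsto.congr' ?_ tendsto_const_nhds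
    filter_upwards [heq0] with y hy using hy.symm
  have hkey := tendsto_nhds_unique t1 t2
  linear_combination hkey / 2

/-- Case where `g` extends: `f (u/2) * g u = 0`. -/
lemma case_g_product {r : ℝ} (hr : 0 < r) {f g G : ℂ → ℂ} (hfe : B2FE r f g)
    (hG : AnalyticAt ℂ G 0) (hgG : ∀ᶠ z in 𝓝[≠] (0:ℂ), g z = G z)
    {u : ℂ} (hu : u ∈ PDisc r) (hgu : AnalyticAt ℂ g u)
    (hfu : AnalyticAt ℂ f (u / 2)) :
    f (u / 2) * g u = 0 := by
  set l : Filter ℂ := 𝓝[≠] (0:ℂ) with hl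
  have hu2 : u / 2 ∈ PDisc r := by
    obtain ⟨h1, h2⟩ := mem_pdisc.1 hu
    rw [mem_pdisc]
    constructor
    · rw [norm_div]
      simp only [Complex.norm_ofNat]
      linarith [norm_nonneg u]
    · simpa using h2
  have tx : Filter.Tendsto (fun v : ℂ => (u + v) / 2) (𝓝 0) (𝓝 (u / 2)) :=
    ((continuous_const.add continuous_id).div_const 2).tendsto' 0 (u/2) (by simp)
  have ty : Filter.Tendsto (fun v : ℂ => (u - v) / 2) (𝓝 0) (𝓝 (u / 2)) :=
    ((continuous_const.sub continuous_id).div_const 2).tendsto' 0 (u/2) (by simp)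
  have e1 : ∀ᶠ v in l, (u + v) / 2 ∈ PDisc r :=
    (tx.eventually (pdisc_isOpen.eventually_mem hu2)).filter_mono nhdsWithin_le_nhds
  have e2 : ∀ᶠ v in l, (u - v) / 2 ∈ PDisc r :=
    (ty.eventually (pdisc_isOpen.eventually_mem hu2)).filter_mono nhdsWithin_le_nhds
  have e3 : ∀ᶠ v in l, v ∈ PDisc r := eventually_mem_pdisc hr
  have e4 : ∀ᶠ v in l, AnalyticAt ℂ f ((u + v) / 2) :=
    (tx.eventually hfu.eventually_analyticAt).filter_mono nhdsWithin_le_nhds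
  have e5 : ∀ᶠ v in l, AnalyticAt ℂ f ((u - v) / 2) :=
    (ty.eventually hfu.eventually_analyticAt).filter_mono nhdsWithin_le_nhds
  have e6 : ∀ᶠ v in l, AnalyticAt ℂ g v ∧ g v = G v := extension_eventually hG hgG
  have heq0 : ∀ᶠ v in l,
      f ((u + v) / 2) * (g u + G v) + f ((u - v) / 2) * (g u - G v) = 0 := by
    filter_upwards [e1, e2, e3, e4, e5, e6] with v h1 h2 h3 h4 h5 h6
    have hsum : (u + v) / 2 + (u - v) / 2 = u := by ring
    have hdiff : (u + v) / 2 - (u - v) / 2 = v := by ring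
    have := hfe ((u + v) / 2) ((u - v) / 2) h1 h2 (by rw [hsum]; exact hu)
      (by rw [hdiff]; exact h3) h4 h5 (by rw [hsum]; exact hgu) (by rw [hdiff]; exact h6.1)
    rw [hsum, hdiff, h6.2] at this
    exact this
  have tf1 : Filter.Tendsto (fun v : ℂ => f ((u + v) / 2)) l (𝓝 (f (u / 2))) :=
    (hfu.continuousAt.tendsto.comp tx).mono_left nhdsWithin_le_nhds
  have tf2 : Filter.Tendsto (fun v : ℂ => f ((u - v) / 2)) l (𝓝 (f (u / 2))) :=
    (hfu.continuousAt.tendsto.comp ty).mono_left nhdsWithin_le_nhds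
  have tG : Filter.Tendsto G l (𝓝 (G 0)) :=
    hG.continuousAt.tendsto.mono_left nhdsWithin_le_nhds
  have t1 : Filter.Tendsto
      (fun v : ℂ => f ((u + v) / 2) * (g u + G v) + f ((u - v) / 2) * (g u - G v)) l
      (𝓝 (f (u / 2) * (g u + G 0) + f (u / 2) * (g u - G 0))) :=
    (tf1.mul (tendsto_const_nhds.add tG)).add (tf2.mul (tendsto_const_nhds.sub tG))
  have t2 : Filter.Tendsto
      (fun v : ℂ => f ((u + v) / 2) * (g u + G v) + f ((u - v) / 2) * (g u - G v)) l
      (𝓝 0) := by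
    refine Filter.Tendsto.congr' ?_ tendsto_const_nhds
    filter_upwards [heq0] with v hv using hv.symm
  have hkey := tendsto_nhds_unique t1 t2
  linear_combination hkey / 2

lemma pdisc_half {r : ℝ} {b : ℂ} (hb : b ∈ PDisc r) : b / 2 ∈ PDisc r := by
  obtain ⟨h1, h2⟩ := mem_pdisc.1 hb
  rw [mem_pdisc]
  constructor
  · rw [norm_div]
    simp only [Complex.norm_ofNat]
    linarith [norm_nonneg b]
  · simpa using h2

theorem b2_regular_solution_is_trivial
    (r : ℝ) (hr : 0 < r) (f g : ℂ → ℂ)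
    (hfmer : MeromorphicOn f (PDisc r)) (hgmer : MeromorphicOn g (PDisc r))
    (hfe : B2FE r f g)
    (hreg : ExtendsHolomorphicallyToZero f ∨ ExtendsHolomorphicallyToZero g) :
    (∀ z ∈ PDisc r, AnalyticAt ℂ f z → f z = 0) ∨
      (∀ z ∈ PDisc r, AnalyticAt ℂ g z → g z = 0) := by
  by_contra hcon
  push_neg at hcon
  obtain ⟨hnf, hng⟩ := hcon
  obtain ⟨a, ha, hfa, hfa0⟩ := hnf
  obtain ⟨b, hb, hgb, hgb0⟩ := hng
  rcases hreg with ⟨F, hF, hfF⟩ | ⟨G, hG, hgG⟩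
  · -- f extends to 0
    have e1 : ∀ᶠ w in 𝓝[≠] a, w ∈ PDisc r :=
      (pdisc_isOpen.eventually_mem ha).filter_mono nhdsWithin_le_nhds
    have e2 : ∀ᶠ w in 𝓝[≠] a, AnalyticAt ℂ f w :=
      hfa.eventually_analyticAt.filter_mono nhdsWithin_le_nhds
    have e3 : ∀ᶠ w in 𝓝[≠] a, AnalyticAt ℂ g w := (hgmer a ha).eventually_analyticAt
    have e4 : ∀ᶠ w in 𝓝[≠] a, f w ≠ 0 :=
      (hfa.continuousAt.tendsto.eventually_ne hfa0).filter_mono nhdsWithin_le_nhds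
    have hgz : ∀ᶠ w in 𝓝[≠] a, g w = 0 := by
      filter_upwards [e1, e2, e3, e4] with w h1 h2 h3 h4
      have := case_f_product hr hfe hF hfF h1 h2 h3
      rcases mul_eq_zero.1 this with h | h
      · exact absurd h h4
      · exact h
    exact hgb0 (propagate_zero hr hgmer ha hgz b hb hgb)
  · -- g extends to 0
    have hb2 : b / 2 ∈ PDisc r := pdisc_half hb
    have t2w : Filter.Tendsto (fun w : ℂ => 2 * w) (𝓝 (b / 2)) (𝓝 b) :=
      (continuous_const.mul continuous_id).tendsto' (b / 2) b (by simp; ring)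
    have e1 : ∀ᶠ w in 𝓝[≠] (b / 2), 2 * w ∈ PDisc r :=
      (t2w.eventually (pdisc_isOpen.eventually_mem hb)).filter_mono nhdsWithin_le_nhds
    have e2 : ∀ᶠ w in 𝓝[≠] (b / 2), AnalyticAt ℂ g (2 * w) :=
      (t2w.eventually hgb.eventually_analyticAt).filter_mono nhdsWithin_le_nhds
    have e3 : ∀ᶠ w in 𝓝[≠] (b / 2), AnalyticAt ℂ f w :=
      (hfmer (b / 2) hb2).eventually_analyticAt
    have e4 : ∀ᶠ w in 𝓝[≠] (b / 2), g (2 * w) ≠ 0 :=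
      ((hgb.continuousAt.tendsto.comp t2w).eventually_ne hgb0).filter_mono
        nhdsWithin_le_nhds
    have hfz : ∀ᶠ w in 𝓝[≠] (b / 2), f w = 0 := by
      filter_upwards [e1, e2, e3, e4] with w h1 h2 h3 h4
      have hw : (2 * w) / 2 = w := by ring
      have := case_g_product hr hfe hG hgG h1 h2 (by rw [hw]; exact h3)
      rw [hw] at this
      rcases mul_eq_zero.1 this with h | h
      · exact h
      · exact absurd h h4
    exact hfa0 (propagate_zero hr hfmer hb2 hfz a ha hfa)
end

section
/- Let D ⊆ ℂ be an open disc centered at 0 and let f be meromorphic on D such that z ↦ f(z) − 1/z extends holomorphically to D with value 0 at z = 0, and suppose f satisfies the addition theorem f(x+y) = (f(x)f′(y) − f(y)f′(x)) / (f(x)² − f(y)²) for all x, y ∈ D ∖ {0} with x + y ∈ D ∖ {0} at which f is analytic and f(x)² ≠ f(y)². Then there exist constants a, b ∈ ℂ such that f″(z) = 2 f(z)³ + 6a f(z) and f′(z)² = f(z)⁴ + 6a f(z)² + b for all z ∈ D ∖ {0} at which f is analytic; consequently φ = 1/f is an odd holomorphic solution near 0 of (φ′)² = 1 + 6a φ²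 + b φ⁴ with φ(0) = 0. -/
/-!
Write `f = A / z` with `A z = 1 + z h(z)`. Multiplying the addition theorem by `y²` turns it, for
fixed `x`, into an identity between functions of `y` that are holomorphic at `y = 0`; comparing
their second derivatives at `y = 0` gives `f'' = 2f³ + 6af` with `a = -h'(0)`. This equation has
the first integral `f'² - f⁴ - 6af²`, which is constant on the connected punctured disc. Near `0`,
`φ = 1/f = z / A` is holomorphic and inherits `φ'² = 1 + 6aφ² + bφ⁴` and `φ'' = 6aφ + 2bφ³`.
The latter has an odd right-hand side, so `δ z = φ z + φ (-z)` satisfies a linear equation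
`δ'' = W δ` with `δ 0 = δ' 0 = 0`; comparing vanishing orders at `0` forces `δ = 0`.
-/

open Metric Filter Set
open scoped Topology

theorem Complex.isPreconnected_ball_sdiff_singleton (c : ℂ) (r : ℝ) :
    IsPreconnected (ball c r \ {c}) := by
  have hpolar : ball c r \ {c} =
      (fun p : ℝ × ℝ => c + p.1 * exp (p.2 * I)) '' (Ioo 0 r ×ˢ univ) := by
    ext z
    constructor
    · rintro ⟨hz, hzc : z ≠ c⟩
      refine ⟨(‖z - c‖, arg (z - c)), ⟨⟨norm_pos_iff.2 (sub_ne_zero.2 hzc), ?_⟩, trivial⟩, ?_⟩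
      · rwa [mem_ball, dist_eq] at hz
      · simp [norm_mul_exp_arg_mul_I]
    · rintro ⟨⟨t, θ⟩, ⟨⟨ht, htr⟩, -⟩, rfl⟩
      refine ⟨?_, ?_⟩
      · simp [mem_ball, abs_of_pos ht, htr]
      · simp [ht.ne', exp_ne_zero]
  rw [hpolar]
  exact (isPreconnected_Ioo.prod isPreconnected_univ).image _ (by fun_prop)

theorem Set.EqOn.of_sdiff_singleton {X Y : Type*} [TopologicalSpace X] [TopologicalSpace Y]
    [T2Space Y] {F G : X → Y} {s : Set X} {c : X} [(𝓝[≠] c).NeBot] (hs : IsOpen s)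
    (hF : ContinuousAt F c) (hG : ContinuousAt G c) (h : EqOn F G (s \ {c})) : EqOn F G s := by
  intro z hz
  obtain rfl | hzc := eq_or_ne z c
  · refine ((hF.eventuallyEq_nhds_iff_eventuallyEq_nhdsNE hG).1 ?_).eq_of_nhds
    filter_upwards [nhdsWithin_le_nhds (hs.mem_nhds hz), self_mem_nhdsWithin] with w hw hwz
    exact h ⟨hw, hwz⟩
  · exact h ⟨hz, hzc⟩

theorem iteratedDeriv_two_eq_deriv_deriv {𝕜 E : Type*} [NontriviallyNormedField 𝕜]
    [NormedAddCommGroup E] [NormedSpace 𝕜 E] (F : 𝕜 → E) :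
    iteratedDeriv 2 F = deriv (deriv F) := by
  rw [iteratedDeriv_succ, iteratedDeriv_one]

theorem exists_deriv_sq_eq_of_deriv_deriv_eq {𝕜 : Type*} [RCLike 𝕜] {f : 𝕜 → 𝕜} {U : Set 𝕜}
    {α : 𝕜} (hU : IsOpen U) (hU' : IsPreconnected U) (hf : AnalyticOnNhd 𝕜 f U)
    (hode : ∀ z ∈ U, deriv (deriv f) z = 2 * f z ^ 3 + α * f z) :
    ∃ b, ∀ z ∈ U, deriv f z ^ 2 = f z ^ 4 + α * f z ^ 2 + b := by
  have hE : ∀ z ∈ U, HasDerivAt (fun w => deriv f w ^ 2 - f w ^ 4 - α * f w ^ 2) 0 z := by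
    intro z hz
    have hf' := (hf z hz).differentiableAt.hasDerivAt
    have hf'' := (hf z hz).deriv.differentiableAt.hasDerivAt
    refine (((hf''.pow 2).sub (hf'.pow 4)).sub ((hf'.pow 2).const_mul α)).congr_deriv ?_
    rw [hode z hz]
    push_cast
    ring
  obtain ⟨b, hb⟩ := hU.exists_is_const_of_deriv_eq_zero hU'
    (fun z hz => (hE z hz).differentiableAt.differentiableWithinAt) (fun z hz => (hE z hz).deriv)
  exact ⟨b, fun z hz => by linear_combination hb z hz⟩

section Reciprocal

variable {𝕜 : Type*} [NontriviallyNormedField 𝕜]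

theorem deriv_inv_sq_eq_of_deriv_sq_eq {f : 𝕜 → 𝕜} {z α b : 𝕜} (hf : DifferentiableAt 𝕜 f z)
    (hfz : f z ≠ 0) (hode : deriv f z ^ 2 = f z ^ 4 + α * f z ^ 2 + b) :
    deriv (fun w => (f w)⁻¹) z ^ 2 = 1 + α * (f z)⁻¹ ^ 2 + b * (f z)⁻¹ ^ 4 := by
  rw [deriv_fun_inv'' hf hfz, div_pow, neg_sq, hode]
  field_simp

theorem deriv_deriv_inv_eq_of_deriv_deriv_eq [CompleteSpace 𝕜] {f : 𝕜 → 𝕜} {z α b : 𝕜}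
    (hf : AnalyticAt 𝕜 f z) (hfz : f z ≠ 0) (hode₁ : deriv (deriv f) z = 2 * f z ^ 3 + α * f z)
    (hode₂ : deriv f z ^ 2 = f z ^ 4 + α * f z ^ 2 + b) :
    deriv (deriv fun w => (f w)⁻¹) z = α * (f z)⁻¹ + 2 * b * (f z)⁻¹ ^ 3 := by
  have hderiv : deriv (fun w => (f w)⁻¹) =ᶠ[𝓝 z] fun w => -deriv f w / f w ^ 2 := by
    filter_upwards [hf.eventually_analyticAt, hf.continuousAt.eventually_ne hfz] with w hw hw0
    exact deriv_fun_inv'' hw.differentiableAt hw0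
  have hsq : HasDerivAt (fun w => f w ^ 2) (2 * f z * deriv f z) z := by
    refine (hf.differentiableAt.hasDerivAt.pow 2).congr_deriv ?_
    push_cast
    ring
  rw [hderiv.deriv_eq,
    (hf.deriv.differentiableAt.hasDerivAt.fun_neg.fun_div hsq (pow_ne_zero 2 hfz)).deriv, hode₁]
  field_simp
  linear_combination 2 * hode₂

theorem deriv_sq_eq_and_deriv_deriv_eq_of_eqOn_inv [CompleteSpace 𝕜] {f φ : 𝕜 → 𝕜} {s : Set 𝕜}
    {c α b : 𝕜} (hs : IsOpen s) (hc : c ∈ s)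
    (hφ : AnalyticOnNhd 𝕜 φ s) (hf : AnalyticOnNhd 𝕜 f (s \ {c}))
    (hφf : EqOn φ (fun z => (f z)⁻¹) (s \ {c})) (hf₀ : ∀ z ∈ s \ {c}, f z ≠ 0)
    (hode₁ : ∀ z ∈ s \ {c}, deriv (deriv f) z = 2 * f z ^ 3 + α * f z)
    (hode₂ : ∀ z ∈ s \ {c}, deriv f z ^ 2 = f z ^ 4 + α * f z ^ 2 + b) :
    (∀ z ∈ s, deriv φ z ^ 2 = 1 + α * φ z ^ 2 + b * φ z ^ 4) ∧
      ∀ z ∈ s, deriv (deriv φ) z = α * φ z + 2 * b * φ z ^ 3 := by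
  have hev : ∀ z ∈ s \ {c}, φ =ᶠ[𝓝 z] fun w => (f w)⁻¹ := fun z hz =>
    hφf.eventuallyEq_of_mem ((hs.sdiff isClosed_singleton).mem_nhds hz)
  have hφc := hφ c hc
  have hφc' := hφc.deriv
  have hφc'' := hφc'.deriv
  constructor
  · refine EqOn.of_sdiff_singleton hs (by fun_prop) (by fun_prop) fun z hz => ?_
    rw [(hev z hz).deriv_eq, hφf hz]
    exact deriv_inv_sq_eq_of_deriv_sq_eq (hf z hz).differentiableAt (hf₀ z hz) (hode₂ z hz)
  · refine EqOn.of_sdiff_singleton hs (by fun_prop) (by fun_prop) fun z hz => ?_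
    rw [(hev z hz).deriv.deriv_eq, hφf hz]
    exact deriv_deriv_inv_eq_of_deriv_deriv_eq (hf z hz) (hf₀ z hz) (hode₁ z hz) (hode₂ z hz)

end Reciprocal

theorem AnalyticAt.eventuallyEq_zero_of_deriv_deriv_eq_mul {𝕜 : Type*} [NontriviallyNormedField 𝕜]
    [CharZero 𝕜] [CompleteSpace 𝕜] {δ W : 𝕜 → 𝕜} {z₀ : 𝕜}
    (hδ : AnalyticAt 𝕜 δ z₀) (hW : AnalyticAt 𝕜 W z₀) (h₀ : δ z₀ = 0) (h₁ : deriv δ z₀ = 0)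
    (hode : deriv (deriv δ) =ᶠ[𝓝 z₀] W * δ) : δ =ᶠ[𝓝 z₀] 0 := by
  refine analyticOrderAt_eq_top.mp ?_
  by_contra hfin
  obtain ⟨n, hn⟩ := ENat.ne_top_iff_exists.mp hfin
  have htwo : ((2 : ℕ) : ℕ∞) ≤ analyticOrderAt δ z₀ :=
    (natCast_le_analyticOrderAt_iff_iteratedDeriv_eq_zero hδ).2 fun i hi => by
      interval_cases i <;> simp [h₀, h₁]
  obtain ⟨m, rfl⟩ : ∃ m, n = m + 2 := ⟨n - 2, by rw [← hn] at htwo; norm_cast at htwo; omega⟩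
  have hord : analyticOrderAt (deriv (deriv δ)) z₀ = m :=
    analyticOrderAt_deriv_of_pos hδ.deriv
      (analyticOrderAt_deriv_of_pos hδ (by rw [← hn]; norm_cast))
  rw [analyticOrderAt_congr hode, analyticOrderAt_mul hW hδ, ← hn] at hord
  have := le_add_self.trans hord.le
  norm_cast at this
  omega

theorem neg_eq_of_deriv_deriv_eq {𝕜 : Type*} [RCLike 𝕜] {φ : 𝕜 → 𝕜} {ρ : ℝ} {α β : 𝕜}
    (hφ : AnalyticOnNhd 𝕜 φ (ball 0 ρ)) (h₀ : φ 0 = 0)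
    (hode : ∀ z ∈ ball 0 ρ, deriv (deriv φ) z = α * φ z + β * φ z ^ 3) :
    ∀ z ∈ ball 0 ρ, φ (-z) = -φ z := by
  intro z hz
  have h0 : (0 : 𝕜) ∈ ball 0 ρ := mem_ball_self (pos_of_mem_ball hz)
  have hneg : ∀ w ∈ ball (0 : 𝕜) ρ, -w ∈ ball (0 : 𝕜) ρ := by simp
  set ψ : 𝕜 → 𝕜 := fun w => φ (-w)
  have hψ : AnalyticOnNhd 𝕜 ψ (ball 0 ρ) := fun w hw =>
    (hφ (-w) (hneg w hw)).comp analyticAt_id.neg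
  set δ : 𝕜 → 𝕜 := fun w => φ w + ψ w
  have hδ : AnalyticOnNhd 𝕜 δ (ball 0 ρ) := fun w hw => (hφ w hw).add (hψ w hw)
  -- `φ w ^ 3 + ψ w ^ 3 = δ w * (φ w ^ 2 - φ w * ψ w + ψ w ^ 2)`
  have hode' : deriv (deriv δ) =ᶠ[𝓝 0]
      (fun w => α + β * (φ w ^ 2 - φ w * ψ w + ψ w ^ 2)) * δ := by
    filter_upwards [isOpen_ball.mem_nhds h0] with w hw
    rw [← iteratedDeriv_two_eq_deriv_deriv,
      iteratedDeriv_fun_add (hφ w hw).contDiffAt (hψ w hw).contDiffAt, iteratedDeriv_comp_neg,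
      iteratedDeriv_two_eq_deriv_deriv, hode w hw, hode (-w) (hneg w hw)]
    simp only [δ, ψ, Pi.mul_apply, smul_eq_mul]
    ring
  have hδ₁ : deriv δ 0 = 0 := by
    rw [deriv_fun_add (hφ 0 h0).differentiableAt (hψ 0 h0).differentiableAt, deriv_comp_neg]
    simp
  have hφ0 := hφ 0 h0
  have hψ0 := hψ 0 h0
  have hδ₀ := (hδ 0 h0).eventuallyEq_zero_of_deriv_deriv_eq_mul (by fun_prop)
    (by simp [δ, ψ, h₀]) hδ₁ hode'
  have hδz : δ z = 0 := hδ.eqOn_zero_of_preconnected_of_eventuallyEq_zero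
    (convex_ball _ _).isPreconnected h0 hδ₀ hz
  linear_combination hδz

attribute [local fun_prop] AnalyticAt.contDiffAt in
theorem iteratedDeriv_two_eq_of_eventuallyEq_nhdsNE {𝕜 : Type*} [NontriviallyNormedField 𝕜]
    [CompleteSpace 𝕜] {P h : 𝕜 → 𝕜} (hP : AnalyticAt 𝕜 P 0) (hh : AnalyticAt 𝕜 h 0)
    (h₀ : h 0 = 0)
    (heq : (fun y => P y * (P 0 ^ 2 * y ^ 2 - (1 + y * h y) ^ 2)) =ᶠ[𝓝[≠] 0]
      fun y => P 0 * (-1 + y ^ 2 * deriv h y) - deriv P 0 * (y * (1 + y * h y))) :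
    iteratedDeriv 2 P 0 = 2 * P 0 ^ 3 + 6 * -deriv h 0 * P 0 := by
  have hh' := hh.deriv
  have h₂ := (((hP.fun_mul (by fun_prop)).continuousAt.eventuallyEq_nhds_iff_eventuallyEq_nhdsNE
    (by fun_prop)).1 heq).iteratedDeriv_eq 2
  simp only [sq] at h₂
  simp (discharger := fun_prop) only [iteratedDeriv_fun_add, iteratedDeriv_fun_sub,
    iteratedDeriv_fun_mul, iteratedDeriv_const, iteratedDeriv_fun_id_zero] at h₂
  simp [Finset.sum_range_succ, h₀] at h₂
  linear_combination -h₂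

def AdditionTheoremOn (f : ℂ → ℂ) (s : Set ℂ) : Prop :=
  ∀ x y : ℂ, x ∈ s → y ∈ s → x + y ∈ s → x ≠ 0 → y ≠ 0 → x + y ≠ 0 →
    AnalyticAt ℂ f x → AnalyticAt ℂ f y → AnalyticAt ℂ f (x + y) →
    f x ^ 2 ≠ f y ^ 2 →
    f (x + y) = (f x * deriv f y - f y * deriv f x) / (f x ^ 2 - f y ^ 2)

section SimplePole

variable {r : ℝ} {f h : ℂ → ℂ}

theorem eventuallyEq_inv_add (hfh : EqOn f (fun z => z⁻¹ + h z) (ball 0 r \ {0})) {z : ℂ}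
    (hz : z ∈ ball 0 r \ {0}) : f =ᶠ[𝓝 z] fun w => w⁻¹ + h w :=
  hfh.eventuallyEq_of_mem ((isOpen_ball.sdiff isClosed_singleton).mem_nhds hz)

theorem analyticOnNhd_of_eqOn_inv_add (hh : AnalyticOnNhd ℂ h (ball 0 r))
    (hfh : EqOn f (fun z => z⁻¹ + h z) (ball 0 r \ {0})) : AnalyticOnNhd ℂ f (ball 0 r \ {0}) :=
  fun z hz => ((analyticAt_inv hz.2).add (hh z hz.1)).congr (eventuallyEq_inv_add hfh hz).symm

theorem deriv_eq_of_eqOn_inv_add (hh : AnalyticOnNhd ℂ h (ball 0 r))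
    (hfh : EqOn f (fun z => z⁻¹ + h z) (ball 0 r \ {0})) {z : ℂ} (hz : z ∈ ball 0 r \ {0}) :
    deriv f z = -(z ^ 2)⁻¹ + deriv h z := by
  rw [(eventuallyEq_inv_add hfh hz).deriv_eq,
    deriv_fun_add (differentiableAt_inv hz.2) (hh z hz.1).differentiableAt, deriv_inv]

-- The addition theorem at `(x, y)` multiplied by `y² (f x ² - f y ²)`, using
-- `y f(y) = 1 + y h(y)` and `y² f'(y) = -1 + y² h'(y)`.
theorem eventuallyEq_nhdsNE_of_additionTheoremOn (hh : AnalyticOnNhd ℂ h (ball 0 r))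
    (hfh : EqOn f (fun z => z⁻¹ + h z) (ball 0 r \ {0})) (hadd : AdditionTheoremOn f (ball 0 r))
    {x : ℂ} (hx : x ∈ ball 0 r \ {0}) :
    (fun y => f (x + y) * (f x ^ 2 * y ^ 2 - (1 + y * h y) ^ 2)) =ᶠ[𝓝[≠] 0]
      fun y => f x * (-1 + y ^ 2 * deriv h y) - deriv f x * (y * (1 + y * h y)) := by
  have hU : IsOpen (ball (0 : ℂ) r \ {0}) := isOpen_ball.sdiff isClosed_singleton
  have h0 : (0 : ℂ) ∈ ball 0 r := mem_ball_self (pos_of_mem_ball hx.1)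
  have hf := analyticOnNhd_of_eqOn_inv_add hh hfh
  have hh0 := hh 0 h0
  have hxy : ∀ᶠ y in 𝓝 0, x + y ∈ ball 0 r \ {0} :=
    (continuous_const_add x).continuousAt.preimage_mem_nhds (by simpa using hU.mem_nhds hx)
  have hQ : ∀ᶠ y in 𝓝 (0 : ℂ), f x ^ 2 * y ^ 2 - (1 + y * h y) ^ 2 ≠ 0 :=
    ContinuousAt.eventually_ne (by fun_prop) (by simp)
  filter_upwards [nhdsWithin_le_nhds (hxy.and (hQ.and (isOpen_ball.mem_nhds h0))),
    self_mem_nhdsWithin] with y ⟨hxy, hQy, hy⟩ (hy0 : y ≠ 0)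
  have hyU : y ∈ ball 0 r \ {0} := ⟨hy, hy0⟩
  have hA : y * f y = 1 + y * h y := by rw [hfh hyU]; field_simp
  have hB : y ^ 2 * deriv f y = -1 + y ^ 2 * deriv h y := by
    rw [deriv_eq_of_eqOn_inv_add hh hfh hyU]; field_simp
  have hne : f x ^ 2 - f y ^ 2 ≠ 0 := fun hc => hQy (by rw [← hA]; linear_combination y ^ 2 * hc)
  have hsum := hadd x y hx.1 hy hxy.1 hx.2 hy0 hxy.2 (hf x hx) (hf y hyU) (hf _ hxy)
    (sub_ne_zero.1 hne)
  rw [← hA, ← hB, hsum]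
  field_simp

theorem deriv_deriv_eq_of_additionTheoremOn (hh : AnalyticOnNhd ℂ h (ball 0 r)) (h₀ : h 0 = 0)
    (hfh : EqOn f (fun z => z⁻¹ + h z) (ball 0 r \ {0})) (hadd : AdditionTheoremOn f (ball 0 r)) :
    ∀ x ∈ ball 0 r \ {0}, deriv (deriv f) x = 2 * f x ^ 3 + 6 * -deriv h 0 * f x := by
  intro x hx
  have hfx := analyticOnNhd_of_eqOn_inv_add hh hfh x hx
  have hP : AnalyticAt ℂ (fun y => f (x + y)) 0 := by
    apply AnalyticAt.comp (g := f) _ (by fun_prop)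
    simpa using hfx
  have h₂ := iteratedDeriv_two_eq_of_eventuallyEq_nhdsNE hP
    (hh 0 (mem_ball_self (pos_of_mem_ball hx.1))) h₀
    (by simpa [deriv_comp_const_add] using eventuallyEq_nhdsNE_of_additionTheoremOn hh hfh hadd hx)
  simpa [iteratedDeriv_comp_const_add, iteratedDeriv_two_eq_deriv_deriv] using h₂

theorem exists_analyticOnNhd_eqOn_inv (hr : 0 < r) (hh : AnalyticOnNhd ℂ h (ball 0 r))
    (hfh : EqOn f (fun z => z⁻¹ + h z) (ball 0 r \ {0})) :
    ∃ ρ, 0 < ρ ∧ ρ ≤ r ∧ ∃ φ : ℂ → ℂ, AnalyticOnNhd ℂ φ (ball 0 ρ) ∧ φ 0 = 0 ∧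
      EqOn φ (fun z => (f z)⁻¹) (ball 0 ρ \ {0}) ∧ ∀ z ∈ ball 0 ρ \ {0}, f z ≠ 0 := by
  have hh0 := hh 0 (mem_ball_self hr)
  have hA : ∀ᶠ z in 𝓝 (0 : ℂ), 1 + z * h z ≠ 0 :=
    ContinuousAt.eventually_ne (by fun_prop) (by simp)
  obtain ⟨ρ₀, hρ₀, hA⟩ := Metric.eventually_nhds_iff_ball.1 hA
  have hsub : ball (0 : ℂ) (min ρ₀ r) ⊆ ball 0 r := ball_subset_ball (min_le_right _ _)
  have hA' : ∀ z ∈ ball (0 : ℂ) (min ρ₀ r), 1 + z * h z ≠ 0 := fun z hz =>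
    hA z (ball_subset_ball (min_le_left _ _) hz)
  have hf : ∀ z ∈ ball (0 : ℂ) (min ρ₀ r) \ {0}, f z = (1 + z * h z) / z := fun z hz => by
    have hz0 : z ≠ 0 := hz.2
    rw [hfh ⟨hsub hz.1, hz0⟩]
    field_simp
  refine ⟨min ρ₀ r, lt_min hρ₀ hr, min_le_right _ _, fun z => z / (1 + z * h z),
    fun z hz => ?_, by simp, fun z hz => ?_, fun z hz => ?_⟩
  · have := hh z (hsub hz)
    exact analyticAt_id.div (by fun_prop) (hA' z hz)
  · simp [hf z hz]
  · rw [hf z hz]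
    exact div_ne_zero (hA' z hz.1) hz.2

end SimplePole

theorem addition_theorem_gives_ode_general
    (r : ℝ) (hr : 0 < r) (f : ℂ → ℂ)
    -- `z ↦ f(z) − 1/z` extends holomorphically to the disc, with value `0` at `0`:
    (hpole : ∃ h : ℂ → ℂ, (∀ z ∈ ball (0 : ℂ) r, AnalyticAt ℂ h z) ∧ h 0 = 0 ∧
      ∀ z ∈ ball (0 : ℂ) r, z ≠ 0 → f z = 1 / z + h z)
    -- the addition theorem:
    (hadd : ∀ x y : ℂ, x ∈ ball (0 : ℂ) r → y ∈ ball (0 : ℂ) r →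
      x + y ∈ ball (0 : ℂ) r → x ≠ 0 → y ≠ 0 → x + y ≠ 0 →
      AnalyticAt ℂ f x → AnalyticAt ℂ f y → AnalyticAt ℂ f (x + y) →
      f x ^ 2 ≠ f y ^ 2 →
      f (x + y) = (f x * deriv f y - f y * deriv f x) / (f x ^ 2 - f y ^ 2)) :
    ∃ a b : ℂ,
      (∀ z ∈ ball (0 : ℂ) r, z ≠ 0 → AnalyticAt ℂ f z →
        deriv (deriv f) z = 2 * f z ^ 3 + 6 * a * f z ∧
        (deriv f z) ^ 2 = f z ^ 4 + 6 * a * f z ^ 2 + b) ∧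
      ∃ ρ : ℝ, 0 < ρ ∧ ρ ≤ r ∧ ∃ φ : ℂ → ℂ,
        (∀ z ∈ ball (0 : ℂ) ρ, AnalyticAt ℂ φ z) ∧
        φ 0 = 0 ∧
        (∀ z ∈ ball (0 : ℂ) ρ, φ (-z) = -φ z) ∧
        (∀ z ∈ ball (0 : ℂ) ρ, z ≠ 0 → φ z = (f z)⁻¹) ∧
        (∀ z ∈ ball (0 : ℂ) ρ, (deriv φ z) ^ 2 = 1 + 6 * a * φ z ^ 2 + b * φ z ^ 4) := by
  obtain ⟨h, hh, h₀, hfh⟩ := hpole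
  have hfh' : EqOn f (fun z => z⁻¹ + h z) (ball 0 r \ {0}) := fun z hz => by
    simpa using hfh z hz.1 hz.2
  have hf := analyticOnNhd_of_eqOn_inv_add hh hfh'
  have hode₁ := deriv_deriv_eq_of_additionTheoremOn hh h₀ hfh' hadd
  obtain ⟨b, hode₂⟩ := exists_deriv_sq_eq_of_deriv_deriv_eq (isOpen_ball.sdiff isClosed_singleton)
    (Complex.isPreconnected_ball_sdiff_singleton 0 r) hf hode₁
  refine ⟨-deriv h 0, b, fun z hz hz0 _ => ⟨hode₁ z ⟨hz, hz0⟩, hode₂ z ⟨hz, hz0⟩⟩, ?_⟩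
  obtain ⟨ρ, hρ, hρr, φ, hφ, hφ₀, hφf, hf₀⟩ := exists_analyticOnNhd_eqOn_inv hr hh hfh'
  have hsub : ball (0 : ℂ) ρ \ {0} ⊆ ball 0 r \ {0} :=
    sdiff_subset_sdiff_left (ball_subset_ball hρr)
  obtain ⟨hφ₁, hφ₂⟩ := deriv_sq_eq_and_deriv_deriv_eq_of_eqOn_inv isOpen_ball (mem_ball_self hρ)
    hφ (hf.mono hsub) hφf hf₀ (fun z hz => hode₁ z (hsub hz)) (fun z hz => hode₂ z (hsub hz))
  exact ⟨ρ, hρ, hρr, φ, hφ, hφ₀, neg_eq_of_deriv_deriv_eq hφ hφ₀ hφ₂,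
    fun z hz hz0 => hφf ⟨hz, hz0⟩, hφ₁⟩

theorem addition_theorem_gives_ode
    (r : ℝ) (hr : 0 < r) (f : ℂ → ℂ)
    (hmer : MeromorphicOn f (ball (0 : ℂ) r))
    -- `z ↦ f(z) − 1/z` extends holomorphically to the disc, with value `0` at `0`:
    (hpole : ∃ h : ℂ → ℂ, (∀ z ∈ ball (0 : ℂ) r, AnalyticAt ℂ h z) ∧ h 0 = 0 ∧
      ∀ z ∈ ball (0 : ℂ) r, z ≠ 0 → f z = 1 / z + h z)
    -- the addition theorem:
    (hadd : ∀ x y : ℂ, x ∈ ball (0 : ℂ) r → y ∈ ball (0 : ℂ) r →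
      x + y ∈ ball (0 : ℂ) r → x ≠ 0 → y ≠ 0 → x + y ≠ 0 →
      AnalyticAt ℂ f x → AnalyticAt ℂ f y → AnalyticAt ℂ f (x + y) →
      f x ^ 2 ≠ f y ^ 2 →
      f (x + y) = (f x * deriv f y - f y * deriv f x) / (f x ^ 2 - f y ^ 2)) :
    ∃ a b : ℂ,
      (∀ z ∈ ball (0 : ℂ) r, z ≠ 0 → AnalyticAt ℂ f z →
        deriv (deriv f) z = 2 * f z ^ 3 + 6 * a * f z ∧
        (deriv f z) ^ 2 = f z ^ 4 + 6 * a * f z ^ 2 + b) ∧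
      ∃ ρ : ℝ, 0 < ρ ∧ ρ ≤ r ∧ ∃ φ : ℂ → ℂ,
        (∀ z ∈ ball (0 : ℂ) ρ, AnalyticAt ℂ φ z) ∧
        φ 0 = 0 ∧
        (∀ z ∈ ball (0 : ℂ) ρ, φ (-z) = -φ z) ∧
        (∀ z ∈ ball (0 : ℂ) ρ, z ≠ 0 → φ z = (f z)⁻¹) ∧
        (∀ z ∈ ball (0 : ℂ) ρ, (deriv φ z) ^ 2 = 1 + 6 * a * φ z ^ 2 + b * φ z ^ 4) :=
  addition_theorem_gives_ode_general r hr f hpole hadd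
end

section
/- For all A, B ∈ ℂ and α ∈ ℂ with α ≠ 0, the pairs (f, g) given by f(z) = A·cot(αz), g(z) = B/sin(αz), and by f(z) = A/sin(αz), g(z) = B·cot(αz/2), and by f(z) = A/z, g(z) = B/z, each satisfy the B₂ functional equation: f(x)(g(x+y) + g(x−y)) + f(y)(g(x+y) − g(x−y)) = 0 for all x, y ∈ ℂ such that all the functions appearing are defined (their arguments avoid the respective singular sets). -/
/-!
The `B₂` equation is bilinear in `(f, g)` and invariant under `z ↦ α z`, so it suffices to check
`A = B = α = 1`. The rational case is a partial-fraction identity, the `cot`/`1/sin` case reduces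
to `sin (x + y) + sin (x - y) = 2 sin x cos y` and `sin (x + y) - sin (x - y) = 2 cos x sin y`,
and the `1/sin`/`cot (z/2)` case to `cot u + cot v = sin (u + v) / (sin u sin v)` at
`u, v = (x ± y)/2`, where `u + v = x` and `v - u = -y`.
-/

open Complex

def B2FunctionalEq {R : Type*} [CommRing R] (f g : R → R) (x y : R) : Prop :=
  f x * (g (x + y) + g (x - y)) + f y * (g (x + y) - g (x - y)) = 0

namespace B2FunctionalEq

variable {R : Type*} [CommRing R] {f g : R → R} {x y : R}

theorem const_mul (h : B2FunctionalEq f g x y) (a b : R) :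
    B2FunctionalEq (fun z => a * f z) (fun z => b * g z) x y := by
  unfold B2FunctionalEq at *
  linear_combination a * b * h

theorem comp_mul_left (a : R) (h : B2FunctionalEq f g (a * x) (a * y)) :
    B2FunctionalEq (fun z => f (a * z)) (fun z => g (a * z)) x y := by
  simpa only [B2FunctionalEq, mul_add, mul_sub] using h

end B2FunctionalEq

theorem Complex.cot_add_cot {u v : ℂ} (hu : sin u ≠ 0) (hv : sin v ≠ 0) :
    cot u + cot v = sin (u + v) / (sin u * sin v) := by
  rw [cot_eq_cos_div_sin, cot_eq_cos_div_sin, sin_add]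
  field_simp
  ring

theorem Complex.cot_sub_cot {u v : ℂ} (hu : sin u ≠ 0) (hv : sin v ≠ 0) :
    cot u - cot v = sin (v - u) / (sin u * sin v) := by
  rw [cot_eq_cos_div_sin, cot_eq_cos_div_sin, sin_sub]
  field_simp

theorem b2FunctionalEq_inv_inv {K : Type*} [Field K] {x y : K} (hx : x ≠ 0) (hy : y ≠ 0)
    (hp : x + y ≠ 0) (hm : x - y ≠ 0) : B2FunctionalEq (·⁻¹) (·⁻¹) x y := by
  unfold B2FunctionalEq
  field_simp
  ring

theorem b2FunctionalEq_cot_inv_sin {x y : ℂ} (hx : sin x ≠ 0) (hy : sin y ≠ 0)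
    (hp : sin (x + y) ≠ 0) (hm : sin (x - y) ≠ 0) :
    B2FunctionalEq cot (fun z => (sin z)⁻¹) x y := by
  rw [sin_add] at hp
  rw [sin_sub] at hm
  simp only [B2FunctionalEq]
  rw [sin_add, sin_sub, cot_eq_cos_div_sin, cot_eq_cos_div_sin]
  field_simp
  ring

theorem b2FunctionalEq_inv_sin_cot_half {x y : ℂ} (hx : sin x ≠ 0) (hy : sin y ≠ 0)
    (hp : sin ((x + y) / 2) ≠ 0) (hm : sin ((x - y) / 2) ≠ 0) :
    B2FunctionalEq (fun z => (sin z)⁻¹) (fun z => cot (z / 2)) x y := by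
  unfold B2FunctionalEq
  rw [cot_add_cot hp hm, cot_sub_cot hp hm, show (x + y) / 2 + (x - y) / 2 = x by ring,
    show (x - y) / 2 - (x + y) / 2 = -y by ring, sin_neg]
  field_simp
  ring

theorem degenerate_b2_solutions_general (A B α : ℂ) :
    (∀ x y : ℂ, Complex.sin (α * x) ≠ 0 → Complex.sin (α * y) ≠ 0 →
      Complex.sin (α * (x + y)) ≠ 0 → Complex.sin (α * (x - y)) ≠ 0 →
      (A * Complex.cot (α * x)) *
          (B / Complex.sin (α * (x + y)) + B / Complex.sin (α * (x - y)))
        + (A * Complex.cot (α * y)) *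
          (B / Complex.sin (α * (x + y)) - B / Complex.sin (α * (x - y))) = 0) ∧
    (∀ x y : ℂ, Complex.sin (α * x) ≠ 0 → Complex.sin (α * y) ≠ 0 →
      Complex.sin (α * (x + y) / 2) ≠ 0 → Complex.sin (α * (x - y) / 2) ≠ 0 →
      (A / Complex.sin (α * x)) *
          (B * Complex.cot (α * (x + y) / 2) + B * Complex.cot (α * (x - y) / 2))
        + (A / Complex.sin (α * y)) *
          (B * Complex.cot (α * (x + y) / 2) - B * Complex.cot (α * (x - y) / 2)) = 0) ∧
    (∀ x y : ℂ, x ≠ 0 → y ≠ 0 → x + y ≠ 0 → x - y ≠ 0 →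
      (A / x) * (B / (x + y) + B / (x - y))
        + (A / y) * (B / (x + y) - B / (x - y)) = 0) := by
  refine ⟨fun x y hx hy hp hm => ?_, fun x y hx hy hp hm => ?_, fun x y hx hy hp hm => ?_⟩
  · rw [mul_add] at hp
    rw [mul_sub] at hm
    have h := ((b2FunctionalEq_cot_inv_sin hx hy hp hm).comp_mul_left α).const_mul A B
    simpa only [B2FunctionalEq, div_eq_mul_inv] using h
  · rw [mul_add] at hp
    rw [mul_sub] at hm
    have h := ((b2FunctionalEq_inv_sin_cot_half hx hy hp hm).comp_mul_left α).const_mul A B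
    simpa only [B2FunctionalEq, div_eq_mul_inv] using h
  · have h := (b2FunctionalEq_inv_inv hx hy hp hm).const_mul A B
    simpa only [B2FunctionalEq, div_eq_mul_inv] using h

theorem degenerate_b2_solutions (A B α : ℂ) (hα : α ≠ 0) :
    (∀ x y : ℂ, Complex.sin (α * x) ≠ 0 → Complex.sin (α * y) ≠ 0 →
      Complex.sin (α * (x + y)) ≠ 0 → Complex.sin (α * (x - y)) ≠ 0 →
      (A * Complex.cot (α * x)) *
          (B / Complex.sin (α * (x + y)) + B / Complex.sin (α * (x - y)))
        + (A * Complex.cot (α * y)) *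
          (B / Complex.sin (α * (x + y)) - B / Complex.sin (α * (x - y))) = 0) ∧
    (∀ x y : ℂ, Complex.sin (α * x) ≠ 0 → Complex.sin (α * y) ≠ 0 →
      Complex.sin (α * (x + y) / 2) ≠ 0 → Complex.sin (α * (x - y) / 2) ≠ 0 →
      (A / Complex.sin (α * x)) *
          (B * Complex.cot (α * (x + y) / 2) + B * Complex.cot (α * (x - y) / 2))
        + (A / Complex.sin (α * y)) *
          (B * Complex.cot (α * (x + y) / 2) - B * Complex.cot (α * (x - y) / 2)) = 0) ∧
    (∀ x y : ℂ, x ≠ 0 → y ≠ 0 → x + y ≠ 0 → x - y ≠ 0 →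
      (A / x) * (B / (x + y) + B / (x - y))
        + (A / y) * (B / (x + y) - B / (x - y)) = 0) :=
  degenerate_b2_solutions_general A B α
end

section
/- Let f, g, h be holomorphic on an open disc D ⊆ ℂ centered at 0, none of them identically zero. Then f, g, h satisfy the A₂ functional equation f(u)g(u+v) + g(v)h(−u) + h(−u−v)f(−v) = 0 for all u, v with u, v, u+v ∈ D if and only if there exist nonzero constants a, b, c ∈ ℂ with ab + bc + ca = 0 and constants α, β, γ ∈ ℂ with α + β + γ = 0 such that f(u) = a·e^{αu}, g(u) = b·e^{βu}, h(u) = c·e^{γu} for all u ∈ D. -/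
/-!
Write `a, b, c` for `f 0, g 0, h 0`. Specialising the equation at `v = 0`, `u = 0` and `u + v = 0`
expresses each of the products `f g`, `h f`, `g h` as `-(a + b)`, `-(a + c)`, `-(b + c)` times the
reflection of the third function. The identity theorem makes these constants nonzero and
`h(u) h(-u)` constant, so `f` and `h` never vanish; and `ab + bc + ca = 0`, i.e.
`a² = (a + b)(a + c)`, gives `a, b, c ≠ 0`.
Eliminating `g` leaves a cocycle identity `x + X = a + c` for `x = f(u) f(v) / f(u + v)` and
`X = H(u) H(v) / H(u + v)`, `H = h(-·)`; applied also at `(-u, u + v)` it forces `x = a`, `X = c`.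
Thus `f` and `H` are multiplicative, hence exponential, and `g = -(a + b) H / f`.
-/

open Metric

theorem neg_mem_ball_zero_iff {E : Type*} [SeminormedAddCommGroup E] {r : ℝ} {x : E} :
    -x ∈ ball (0 : E) r ↔ x ∈ ball (0 : E) r := by
  simp

namespace AnalyticOnNhd

variable {𝕜 A : Type*} [NontriviallyNormedField 𝕜] [NormedRing A] [IsDomain A]
  [NormedAlgebra 𝕜 A] {U : Set 𝕜} {p q : 𝕜 → A}

theorem exists_mul_ne_zero (hp : AnalyticOnNhd 𝕜 p U) (hq : AnalyticOnNhd 𝕜 q U)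
    (hU : IsPreconnected U) (hp₀ : ∃ z ∈ U, p z ≠ 0) (hq₀ : ∃ z ∈ U, q z ≠ 0) :
    ∃ z ∈ U, p z * q z ≠ 0 := by
  by_contra! hpq
  obtain ⟨z, hz, hpz⟩ := hp₀
  obtain ⟨w, hw, hqw⟩ := hq₀
  rcases hp.eq_zero_or_eq_zero_of_mul_eq_zero hq hpq hU with hp' | hq'
  exacts [hpz (hp' z hz), hqw (hq' w hw)]

theorem right_eq_zero_of_mul_eq_zero (hp : AnalyticOnNhd 𝕜 p U) (hq : AnalyticOnNhd 𝕜 q U)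
    (hU : IsPreconnected U) (hpq : ∀ z ∈ U, p z * q z = 0) (hp₀ : ∃ z ∈ U, p z ≠ 0) :
    ∀ z ∈ U, q z = 0 := by
  obtain ⟨z, hz, hpz⟩ := hp₀
  exact (hp.eq_zero_or_eq_zero_of_mul_eq_zero hq hpq hU).resolve_left fun hp' ↦ hpz (hp' z hz)

theorem ne_zero_of_mul_eq {s : 𝕜 → A} {k : A} (hp : AnalyticOnNhd 𝕜 p U)
    (hq : AnalyticOnNhd 𝕜 q U) (hU : IsPreconnected U) (hp₀ : ∃ z ∈ U, p z ≠ 0)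
    (hq₀ : ∃ z ∈ U, q z ≠ 0) (hpq : ∀ z ∈ U, p z * q z = k * s z) : k ≠ 0 := by
  rintro rfl
  obtain ⟨z, hz, hpqz⟩ := hp.exists_mul_ne_zero hq hU hp₀ hq₀
  exact hpqz (by rw [hpq z hz, zero_mul])

end AnalyticOnNhd

namespace IsOpen

variable {U : Set ℂ} {φ : ℂ → ℂ}

theorem eq_mul_exp_of_hasDerivAt (hU : IsOpen U) (hU' : IsPreconnected U)
    (h₀ : 0 ∈ U) {α : ℂ} (hφ : ∀ z ∈ U, HasDerivAt φ (α * φ z) z) {z : ℂ} (hz : z ∈ U) :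
    φ z = φ 0 * Complex.exp (α * z) := by
  have hψ : ∀ w ∈ U, HasDerivAt (fun w ↦ φ w * Complex.exp (-α * w)) 0 w := by
    intro w hw
    have hexp : HasDerivAt (fun w ↦ Complex.exp (-α * w)) (Complex.exp (-α * w) * -α) w := by
      simpa using ((hasDerivAt_id w).const_mul (-α)).cexp
    refine ((hφ w hw).mul hexp).congr_deriv ?_
    ring
  have hconst := hU.is_const_of_deriv_eq_zero hU'
    (fun w hw ↦ (hψ w hw).differentiableAt.differentiableWithinAt)
    (fun w hw ↦ (hψ w hw).deriv) hz h₀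
  calc φ z = φ z * Complex.exp (-α * z) * Complex.exp (α * z) := by
        rw [mul_assoc, ← Complex.exp_add, neg_mul, neg_add_cancel, Complex.exp_zero, mul_one]
    _ = φ 0 * Complex.exp (α * z) := by simpa using congrArg (· * Complex.exp (α * z)) hconst

theorem hasDerivAt_of_mul_eq (hU : IsOpen U) (h₀ : 0 ∈ U)
    (hφ : DifferentiableAt ℂ φ 0) (hφ₀ : φ 0 ≠ 0)
    (hmul : ∀ u v, u ∈ U → v ∈ U → u + v ∈ U → φ u * φ v = φ 0 * φ (u + v))
    {u : ℂ} (hu : u ∈ U) : HasDerivAt φ (deriv φ 0 / φ 0 * φ u) u := by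
  have htranslate : φ =ᶠ[nhds u] fun z ↦ φ u * φ (z - u) / φ 0 := by
    have hsub : ∀ᶠ z in nhds u, z - u ∈ U :=
      (continuous_sub_right u).continuousAt.preimage_mem_nhds (by simpa using hU.mem_nhds h₀)
    filter_upwards [hsub, hU.mem_nhds hu] with z hz hzU
    rw [hmul u (z - u) hu hz (by rwa [add_sub_cancel]), add_sub_cancel,
      mul_div_cancel_left₀ _ hφ₀]
  have hshift : HasDerivAt (fun z ↦ φ (z - u)) (deriv φ 0) u :=
    HasDerivAt.comp_sub_const u u (by simpa using hφ.hasDerivAt)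
  refine (((hshift.const_mul (φ u)).div_const (φ 0)).congr_of_eventuallyEq htranslate).congr_deriv
    ?_
  ring

theorem exists_eq_mul_exp_of_mul_eq (hU : IsOpen U) (hU' : IsPreconnected U) (h₀ : 0 ∈ U)
    (hφ : DifferentiableAt ℂ φ 0) (hφ₀ : φ 0 ≠ 0)
    (hmul : ∀ u v, u ∈ U → v ∈ U → u + v ∈ U → φ u * φ v = φ 0 * φ (u + v)) :
    ∃ α, ∀ z ∈ U, φ z = φ 0 * Complex.exp (α * z) :=
  ⟨_, fun _ hz ↦ hU.eq_mul_exp_of_hasDerivAt hU' h₀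
    (fun _ hw ↦ hU.hasDerivAt_of_mul_eq h₀ hφ hφ₀ hmul hw) hz⟩

end IsOpen

theorem eq_of_add_eq_of_mul_eq {R : Type*} [CommRing R] [IsDomain R] {a c x y X Y : R}
    (hac : a + c ≠ 0) (hxX : x + X = a + c) (hyY : y + Y = a + c)
    (hxy : x * y = a ^ 2) (hXY : X * Y = c ^ 2) : x = a := by
  obtain rfl : X = a + c - x := by linear_combination hxX
  obtain rfl : Y = a + c - y := by linear_combination hyY
  have hsum : x + y = 2 * a := mul_left_cancel₀ hac (by linear_combination hxy - hXY)
  have hsq : (x - a) ^ 2 = 0 := by linear_combination x * hsum - hxy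
  exact sub_eq_zero.mp (pow_eq_zero_iff two_ne_zero |>.mp hsq)

theorem ne_zero_of_add_ne_zero_of_mul_add_mul_add_mul_eq_zero {R : Type*} [CommRing R]
    [NoZeroDivisors R] {a b c : R} (habc : a * b + b * c + c * a = 0) (hab : a + b ≠ 0)
    (hac : a + c ≠ 0) : a ≠ 0 :=
  ne_zero_pow two_ne_zero <| by
    rw [show a ^ 2 = (a + b) * (a + c) by linear_combination -habc]
    exact mul_ne_zero hab hac

def A2FunctionalEquation (U : Set ℂ) (f g h : ℂ → ℂ) : Prop :=
  ∀ u v, u ∈ U → v ∈ U → u + v ∈ U →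
    f u * g (u + v) + g v * h (-u) + h (-(u + v)) * f (-v) = 0

theorem a2FunctionalEquation_const_mul_exp {a b c α β γ : ℂ}
    (habc : a * b + b * c + c * a = 0) (hαβγ : α + β + γ = 0) (U : Set ℂ) :
    A2FunctionalEquation U (fun z ↦ a * Complex.exp (α * z)) (fun z ↦ b * Complex.exp (β * z))
      (fun z ↦ c * Complex.exp (γ * z)) := by
  intro u v _ _ _
  obtain rfl : γ = -α - β := by linear_combination hαβγ
  calc _ = (a * b + b * c + c * a) * Complex.exp ((α + β) * u + β * v) := by
        simp only [mul_mul_mul_comm _ (Complex.exp _), ← Complex.exp_add]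
        ring_nf
    _ = 0 := by rw [habc, zero_mul]

namespace A2FunctionalEquation

theorem of_eqOn {U : Set ℂ} {f g h f' g' h' : ℂ → ℂ} (hE : A2FunctionalEquation U f' g' h')
    (hU : ∀ z ∈ U, -z ∈ U) (hf : U.EqOn f f') (hg : U.EqOn g g') (hh : U.EqOn h h') :
    A2FunctionalEquation U f g h := by
  intro u v hu hv huv
  rw [hf hu, hg huv, hg hv, hh (hU u hu), hh (hU _ huv), hf (hU v hv)]
  exact hE u v hu hv huv

variable {r : ℝ} {f g h : ℂ → ℂ}

theorem f_mul_g (hE : A2FunctionalEquation (ball 0 r) f g h) {u : ℂ} (hu : u ∈ ball 0 r) :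
    f u * g u = -(f 0 + g 0) * h (-u) := by
  have e := hE u 0 hu (mem_ball_self (pos_of_mem_ball hu)) (by simpa using hu)
  simp only [add_zero, neg_zero] at e
  linear_combination e

theorem h_mul_f (hE : A2FunctionalEquation (ball 0 r) f g h) {u : ℂ} (hu : u ∈ ball 0 r) :
    h u * f u = -(f 0 + h 0) * g (-u) := by
  have hu' := neg_mem_ball_zero_iff.2 hu
  have e := hE 0 (-u) (mem_ball_self (pos_of_mem_ball hu)) hu' (by simpa using hu')
  simp only [zero_add, neg_zero, neg_neg] at e
  linear_combination e

theorem g_mul_h (hE : A2FunctionalEquation (ball 0 r) f g h) {u : ℂ} (hu : u ∈ ball 0 r) :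
    g u * h u = -(g 0 + h 0) * f (-u) := by
  have e := hE (-u) u (neg_mem_ball_zero_iff.2 hu) hu (by simpa using pos_of_mem_ball hu)
  simp only [neg_add_cancel, neg_zero, neg_neg] at e
  linear_combination e

theorem mul_add_mul_add_mul_eq_zero (hE : A2FunctionalEquation (ball 0 r) f g h) (hr : 0 < r) :
    f 0 * g 0 + g 0 * h 0 + h 0 * f 0 = 0 := by
  have h₀ : (0 : ℂ) ∈ ball 0 r := mem_ball_self hr
  simpa using hE 0 0 h₀ h₀ (by simpa using h₀)

theorem h_mul_h_neg (hE : A2FunctionalEquation (ball 0 r) f g h)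
    (hh : AnalyticOnNhd ℂ h (ball 0 r)) (hh₀ : ∃ z ∈ ball 0 r, h z ≠ 0)
    (hab : f 0 + g 0 ≠ 0) {u : ℂ} (hu : u ∈ ball 0 r) :
    h u * h (-u) = (f 0 + h 0) * (g 0 + h 0) := by
  have hvanish : ∀ z ∈ ball 0 r, h z * (h z * h (-z) - (f 0 + h 0) * (g 0 + h 0)) = 0 := by
    intro z hz
    have hfg' := hE.f_mul_g (neg_mem_ball_zero_iff.2 hz)
    rw [neg_neg] at hfg'
    refine mul_left_cancel₀ hab ?_
    linear_combination h z ^ 2 * hE.f_mul_g hz - (g z * h z) * hE.h_mul_f hz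
      + (f 0 + h 0) * g (-z) * hE.g_mul_h hz - (f 0 + h 0) * (g 0 + h 0) * hfg'
  have hh_neg : AnalyticOnNhd ℂ (fun z ↦ h (-z)) (ball 0 r) :=
    hh.comp analyticOnNhd_id.neg fun _ ↦ neg_mem_ball_zero_iff.2
  exact sub_eq_zero.1 <| hh.right_eq_zero_of_mul_eq_zero
    ((hh.mul hh_neg).sub analyticOnNhd_const) (convex_ball 0 r).isPreconnected hvanish hh₀ u hu

theorem h_ne_zero (hhh : ∀ z ∈ ball 0 r, h z * h (-z) = (f 0 + h 0) * (g 0 + h 0))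
    (hac : f 0 + h 0 ≠ 0) (hbc : g 0 + h 0 ≠ 0) {u : ℂ} (hu : u ∈ ball 0 r) : h u ≠ 0 :=
  left_ne_zero_of_mul <| by
    rw [hhh u hu]
    exact mul_ne_zero hac hbc

theorem f_ne_zero (hE : A2FunctionalEquation (ball 0 r) f g h) (hab : f 0 + g 0 ≠ 0)
    (hh : ∀ z ∈ ball 0 r, h z ≠ 0) {u : ℂ} (hu : u ∈ ball 0 r) : f u ≠ 0 :=
  left_ne_zero_of_mul <| by
    rw [hE.f_mul_g hu]
    exact mul_ne_zero (neg_ne_zero.2 hab) (hh _ (neg_mem_ball_zero_iff.2 hu))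

theorem f_mul_f_neg (hE : A2FunctionalEquation (ball 0 r) f g h)
    (hh : ∀ z ∈ ball 0 r, h z ≠ 0) {u : ℂ} (hu : u ∈ ball 0 r) :
    f u * f (-u) = (f 0 + g 0) * (f 0 + h 0) := by
  have hu' := neg_mem_ball_zero_iff.2 hu
  have hhf := hE.h_mul_f hu'
  rw [neg_neg] at hhf
  refine mul_left_cancel₀ (hh _ hu') ?_
  linear_combination f u * hhf - (f 0 + h 0) * hE.f_mul_g hu

theorem cocycle (hE : A2FunctionalEquation (ball 0 r) f g h) (hab : f 0 + g 0 ≠ 0)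
    (hf : ∀ z ∈ ball 0 r, f z ≠ 0) (hh : ∀ z ∈ ball 0 r, h z ≠ 0) {u v : ℂ}
    (hu : u ∈ ball 0 r) (hv : v ∈ ball 0 r) (huv : u + v ∈ ball 0 r) :
    f u * f v / f (u + v) + h (-u) * h (-v) / h (-(u + v)) = f 0 + h 0 := by
  have hfuv := hf _ huv
  have hhuv := hh _ (neg_mem_ball_zero_iff.2 huv)
  rw [div_add_div _ _ hfuv hhuv, div_eq_iff (mul_ne_zero hfuv hhuv)]
  refine mul_left_cancel₀ hab ?_
  linear_combination (-(f (u + v) * f v)) * hE u v hu hv huv + (f u * f v) * hE.f_mul_g huv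
    + (f (u + v) * h (-u)) * hE.f_mul_g hv + (f (u + v) * h (-(u + v))) * hE.f_mul_f_neg hh hv

theorem f_mul_f (hE : A2FunctionalEquation (ball 0 r) f g h) (hab : f 0 + g 0 ≠ 0)
    (hac : f 0 + h 0 ≠ 0) (hf : ∀ z ∈ ball 0 r, f z ≠ 0) (hh : ∀ z ∈ ball 0 r, h z ≠ 0)
    (hhh : ∀ z ∈ ball 0 r, h z * h (-z) = (f 0 + h 0) * (g 0 + h 0)) {v w : ℂ}
    (hv : v ∈ ball 0 r) (hw : w ∈ ball 0 r) (hvw : v + w ∈ ball 0 r) :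
    f v * f w = f 0 * f (v + w) := by
  have habc := hE.mul_add_mul_add_mul_eq_zero (pos_of_mem_ball hv)
  have hv' := neg_mem_ball_zero_iff.2 hv
  have hy := hE.cocycle hab hf hh hv' hvw (by rwa [neg_add_cancel_left])
  rw [neg_add_cancel_left, neg_neg] at hy
  have hxy : f v * f w / f (v + w) * (f (-v) * f (v + w) / f w) = f 0 ^ 2 := by
    rw [div_mul_div_comm, div_eq_iff (mul_ne_zero (hf _ hvw) (hf _ hw))]
    linear_combination (f (v + w) * f w) * (hE.f_mul_f_neg hh hv + habc)
  have hhv := hhh (-v) hv'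
  rw [neg_neg] at hhv
  have hXY : h (-v) * h (-w) / h (-(v + w)) * (h v * h (-(v + w)) / h (-w)) = h 0 ^ 2 := by
    rw [div_mul_div_comm, div_eq_iff (mul_ne_zero (hh _ (neg_mem_ball_zero_iff.2 hvw))
      (hh _ (neg_mem_ball_zero_iff.2 hw)))]
    linear_combination (h (-(v + w)) * h (-w)) * (hhv + habc)
  -- `hy` is the cocycle identity at `(-v, v + w)`; its two quotients multiply those at `(v, w)`
  -- to `f 0 ^ 2` and `h 0 ^ 2`.
  have hx := eq_of_add_eq_of_mul_eq hac (hE.cocycle hab hf hh hv hw hvw) hy hxy hXY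
  rw [div_eq_iff (hf _ hvw)] at hx
  linear_combination hx

theorem h_neg_mul_h_neg (hE : A2FunctionalEquation (ball 0 r) f g h) (hab : f 0 + g 0 ≠ 0)
    (hac : f 0 + h 0 ≠ 0) (hf : ∀ z ∈ ball 0 r, f z ≠ 0) (hh : ∀ z ∈ ball 0 r, h z ≠ 0)
    (hhh : ∀ z ∈ ball 0 r, h z * h (-z) = (f 0 + h 0) * (g 0 + h 0)) {v w : ℂ}
    (hv : v ∈ ball 0 r) (hw : w ∈ ball 0 r) (hvw : v + w ∈ ball 0 r) :
    h (-v) * h (-w) = h 0 * h (-(v + w)) := by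
  have hX := hE.cocycle hab hf hh hv hw hvw
  rwa [hE.f_mul_f hab hac hf hh hhh hv hw hvw, mul_div_cancel_right₀ _ (hf _ hvw), add_right_inj,
    div_eq_iff (hh _ (neg_mem_ball_zero_iff.2 hvw))] at hX

theorem exists_eq_const_mul_exp (hE : A2FunctionalEquation (ball 0 r) f g h) (hr : 0 < r)
    (hf : AnalyticOnNhd ℂ f (ball 0 r)) (hg : AnalyticOnNhd ℂ g (ball 0 r))
    (hh : AnalyticOnNhd ℂ h (ball 0 r)) (hf₀ : ∃ z ∈ ball 0 r, f z ≠ 0)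
    (hg₀ : ∃ z ∈ ball 0 r, g z ≠ 0) (hh₀ : ∃ z ∈ ball 0 r, h z ≠ 0) :
    ∃ a b c α β γ : ℂ, a ≠ 0 ∧ b ≠ 0 ∧ c ≠ 0 ∧
      a * b + b * c + c * a = 0 ∧ α + β + γ = 0 ∧
      ∀ u ∈ ball (0 : ℂ) r,
        f u = a * Complex.exp (α * u) ∧
        g u = b * Complex.exp (β * u) ∧
        h u = c * Complex.exp (γ * u) := by
  have hU := (convex_ball (0 : ℂ) r).isPreconnected
  have h₀ : (0 : ℂ) ∈ ball 0 r := mem_ball_self hr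
  have habc := hE.mul_add_mul_add_mul_eq_zero hr
  have hab := neg_ne_zero.1 (hf.ne_zero_of_mul_eq hg hU hf₀ hg₀ fun _ ↦ hE.f_mul_g)
  have hac := neg_ne_zero.1 (hh.ne_zero_of_mul_eq hf hU hh₀ hf₀ fun _ ↦ hE.h_mul_f)
  have hbc := neg_ne_zero.1 (hg.ne_zero_of_mul_eq hh hU hg₀ hh₀ fun _ ↦ hE.g_mul_h)
  have hhh := fun u (hu : u ∈ ball 0 r) ↦ hE.h_mul_h_neg hh hh₀ hab hu
  have hh_ne := fun u (hu : u ∈ ball 0 r) ↦ h_ne_zero hhh hac hbc hu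
  have hf_ne := fun u (hu : u ∈ ball 0 r) ↦ hE.f_ne_zero hab hh_ne hu
  have ha := ne_zero_of_add_ne_zero_of_mul_add_mul_add_mul_eq_zero habc hab hac
  have hb := ne_zero_of_add_ne_zero_of_mul_add_mul_add_mul_eq_zero (a := g 0) (b := f 0)
    (c := h 0) (by linear_combination habc) (by rwa [add_comm]) hbc
  have hc := ne_zero_of_add_ne_zero_of_mul_add_mul_add_mul_eq_zero (a := h 0) (b := f 0)
    (c := g 0) (by linear_combination habc) (by rwa [add_comm]) (by rwa [add_comm])
  obtain ⟨α, hα⟩ := isOpen_ball.exists_eq_mul_exp_of_mul_eq hU h₀ (hf 0 h₀).differentiableAt ha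
    fun _ _ hv hw hvw ↦ hE.f_mul_f hab hac hf_ne hh_ne hhh hv hw hvw
  have hh_neg : AnalyticOnNhd ℂ (fun z ↦ h (-z)) (ball 0 r) :=
    hh.comp analyticOnNhd_id.neg fun _ ↦ neg_mem_ball_zero_iff.2
  obtain ⟨δ, hδ⟩ := isOpen_ball.exists_eq_mul_exp_of_mul_eq hU h₀ (hh_neg 0 h₀).differentiableAt
    (by simpa using hc) fun _ _ hv hw hvw ↦ by
      simpa using hE.h_neg_mul_h_neg hab hac hf_ne hh_ne hhh hv hw hvw
  simp only [neg_zero] at hδ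
  refine ⟨f 0, g 0, h 0, α, δ - α, -δ, ha, hb, hc, habc, by ring, fun u hu ↦ ⟨hα u hu, ?_, ?_⟩⟩
  · refine mul_left_cancel₀ (hf_ne u hu) ?_
    rw [hE.f_mul_g hu, hδ u hu, hα u hu, sub_mul, Complex.exp_sub]
    field_simp
    linear_combination -habc
  · simpa using hδ (-u) (neg_mem_ball_zero_iff.2 hu)

end A2FunctionalEquation

theorem a2_holomorphic_solutions
    (r : ℝ) (hr : 0 < r) (f g h : ℂ → ℂ)
    (hf : DifferentiableOn ℂ f (ball (0 : ℂ) r))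
    (hg : DifferentiableOn ℂ g (ball (0 : ℂ) r))
    (hh : DifferentiableOn ℂ h (ball (0 : ℂ) r))
    (hfne : ∃ z ∈ ball (0 : ℂ) r, f z ≠ 0)
    (hgne : ∃ z ∈ ball (0 : ℂ) r, g z ≠ 0)
    (hhne : ∃ z ∈ ball (0 : ℂ) r, h z ≠ 0) :
    (∀ u v : ℂ, u ∈ ball (0 : ℂ) r → v ∈ ball (0 : ℂ) r →
        u + v ∈ ball (0 : ℂ) r →
        f u * g (u + v) + g v * h (-u) + h (-(u + v)) * f (-v) = 0)
      ↔
    ∃ a b c α β γ : ℂ, a ≠ 0 ∧ b ≠ 0 ∧ c ≠ 0 ∧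
      a * b + b * c + c * a = 0 ∧ α + β + γ = 0 ∧
      ∀ u ∈ ball (0 : ℂ) r,
        f u = a * Complex.exp (α * u) ∧
        g u = b * Complex.exp (β * u) ∧
        h u = c * Complex.exp (γ * u) := by
  refine ⟨fun hE ↦ A2FunctionalEquation.exists_eq_const_mul_exp hE hr
    (hf.analyticOnNhd isOpen_ball) (hg.analyticOnNhd isOpen_ball) (hh.analyticOnNhd isOpen_ball)
    hfne hgne hhne, ?_⟩
  rintro ⟨a, b, c, α, β, γ, -, -, -, habc, hαβγ, hval⟩
  exact (a2FunctionalEquation_const_mul_exp habc hαβγ _).of_eqOn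
    (fun _ ↦ neg_mem_ball_zero_iff.2) (fun u hu ↦ (hval u hu).1) (fun u hu ↦ (hval u hu).2.1)
    (fun u hu ↦ (hval u hu).2.2)
end

section
/- Let a, λ, μ, ν, α, β, γ ∈ ℂ with λ, μ, ν ≠ 0, λ + μ + ν = 0 and α + β + γ = 0. Then the functions f(u) = (a/u − 1/λ)e^{αu}, g(u) = (a/u − 1/μ)e^{βu}, h(u) = (a/u − 1/ν)e^{γu} satisfy the A₂ functional equation: f(u)g(u+v) + g(v)h(−u) + h(−u−v)f(−v) = 0 for all u, v ∈ ℂ with u ≠ 0, v ≠ 0 and u + v ≠ 0. -/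
/-!
STATEMENT 16: The rational triples `f(u) = (a/u − 1/λ)e^{αu}`,
`g(u) = (a/u − 1/μ)e^{βu}`, `h(u) = (a/u − 1/ν)e^{γu}` with
`λ + μ + ν = 0` and `α + β + γ = 0` satisfy the `A₂` functional equation.
-/

theorem rational_a2_solutions
    (a lam mu nu α β γ : ℂ)
    (hlam : lam ≠ 0) (hmu : mu ≠ 0) (hnu : nu ≠ 0)
    (hsum : lam + mu + nu = 0) (hαβγ : α + β + γ = 0) :
    ∀ u v : ℂ, u ≠ 0 → v ≠ 0 → u + v ≠ 0 →
      ((a / u - 1 / lam) * Complex.exp (α * u)) *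
          ((a / (u + v) - 1 / mu) * Complex.exp (β * (u + v)))
        + ((a / v - 1 / mu) * Complex.exp (β * v)) *
          ((a / (-u) - 1 / nu) * Complex.exp (γ * (-u)))
        + ((a / (-(u + v)) - 1 / nu) * Complex.exp (γ * (-(u + v)))) *
          ((a / (-v) - 1 / lam) * Complex.exp (α * (-v))) = 0 := by
  intro u v hu hv huv
  have hγ : γ = -α - β := by linear_combination hαβγ
  have hν : nu = -lam - mu := by linear_combination hsum
  subst hγ hν
  have h1 : Complex.exp (α * u) * Complex.exp (β * (u + v))
      = Complex.exp (α * u + β * u + β * v) := by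
    rw [← Complex.exp_add]; ring_nf
  have h2 : Complex.exp (β * v) * Complex.exp ((-α - β) * (-u))
      = Complex.exp (α * u + β * u + β * v) := by
    rw [← Complex.exp_add]; ring_nf
  have h3 : Complex.exp ((-α - β) * (-(u + v))) * Complex.exp (α * (-v))
      = Complex.exp (α * u + β * u + β * v) := by
    rw [← Complex.exp_add]; ring_nf
  have hrat : (a / u - 1 / lam) * (a / (u + v) - 1 / mu)
      + (a / v - 1 / mu) * (a / (-u) - 1 / (-lam - mu))
      + (a / (-(u + v)) - 1 / (-lam - mu)) * (a / (-v) - 1 / lam) = 0 := by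
    have hu' : (-u : ℂ) ≠ 0 := neg_ne_zero.mpr hu
    have hv' : (-v : ℂ) ≠ 0 := neg_ne_zero.mpr hv
    have huv' : (-(u + v) : ℂ) ≠ 0 := neg_ne_zero.mpr huv
    have hlm : (lam + mu : ℂ) ≠ 0 := by
      intro h; exact hnu (by linear_combination -h)
    have e : (-lam - mu : ℂ) = -(lam + mu) := by ring
    rw [e]
    simp only [div_neg]
    field_simp
    ring
  linear_combination
    ((a / u - 1 / lam) * (a / (u + v) - 1 / mu)) * h1
    + ((a / v - 1 / mu) * (a / (-u) - 1 / (-lam - mu))) * h2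
    + ((a / (-(u + v)) - 1 / (-lam - mu)) * (a / (-v) - 1 / lam)) * h3
    + Complex.exp (α * u + β * u + β * v) * hrat
end
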